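/- arXiv:math/0303238 — 10 statements merged into one kernel-verified Lean document; each statement's English description precedes it below -/
import Mathlib

section
/- Let n ≥ 2 and let Γ be a finite index subgroup of SL_n(ℤ). Let F : ℝⁿ → ℝⁿ be a bijection such that F and F⁻¹ are C¹, and such that F(x+m) − F(x) ∈ ℤⁿ for all x ∈ ℝⁿ and m ∈ ℤⁿ (so F descends to a C¹ diffeomorphism of the torus ℝⁿ/ℤⁿ). Suppose that for every x ∈ ℝⁿ there exist γ ∈ Γ and m ∈ ℤⁿ with F(x) = γx + m (i.e., the induced torus map preserves each Γ-orbit). Then there exist a single γ ∈ Γ and a single m ∈ ℤⁿ such that F(x) = γx + m for all x ∈ ℝⁿ. -/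
/-!
The sets `{x | F x = γ x + m}` are closed and countably many of them cover `ℝⁿ`, so by Baire
the union of their interiors is dense. On that union the Jacobian of `F` is an integer matrix;
being continuous, it is an integer matrix everywhere, hence constant since `ℝⁿ` is connected.
So `F` is affine with the linear part `γ` of any piece with nonempty interior, and agreeing with
`γ x + m` at one point of that piece it agrees everywhere.
-/

/-- The linear action of an integer matrix on `ℝⁿ`. -/
def intMatAct {n : ℕ} (γ : Matrix (Fin n) (Fin n) ℤ) (x : Fin n → ℝ) : Fin n → ℝ :=
  (γ.map (Int.cast : ℤ → ℝ)).mulVec x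

open Set

instance Matrix.countable {m n α : Type*} [Finite m] [Finite n] [Countable α] :
    Countable (Matrix m n α) :=
  inferInstanceAs (Countable (m → n → α))

lemma Continuous.apply_eq_of_forall_mem_range_intCast {X : Type*} [TopologicalSpace X]
    [PreconnectedSpace X] {g : X → ℝ} (hg : Continuous g)
    (hint : ∀ x, g x ∈ range ((↑) : ℤ → ℝ)) (x y : X) : g x = g y := by
  choose k hk using hint
  have hk_cont : Continuous k :=
    Int.isClosedEmbedding_coe_real.continuous_iff.2 (by simpa only [Function.comp_def, hk] using hg)
  rw [← hk x, ← hk y, PreconnectedSpace.constant ‹_› hk_cont]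

lemma Continuous.apply_eq_of_dense_of_mem_range_intCast {X : Type*} [TopologicalSpace X]
    [PreconnectedSpace X] {g : X → ℝ} (hg : Continuous g) {s : Set X} (hs : Dense s)
    (hint : ∀ x ∈ s, g x ∈ range ((↑) : ℤ → ℝ)) (x y : X) : g x = g y :=
  hg.apply_eq_of_forall_mem_range_intCast (fun z => (hg.range_subset_closure_image_dense hs).trans
    (closure_minimal ((image_subset_iff (t := range ((↑) : ℤ → ℝ))).2 hint)
      Int.isClosedEmbedding_coe_real.isClosed_range) (mem_range_self z)) x y

lemma HasFDerivAt.of_mem_interior_setOf_eq_add {𝕜 E G : Type*} [NontriviallyNormedField 𝕜]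
    [NormedAddCommGroup E] [NormedSpace 𝕜 E] [NormedAddCommGroup G] [NormedSpace 𝕜 G]
    {f : E → G} {L : E →L[𝕜] G} {c : G} {x : E} (hx : x ∈ interior {y | f y = L y + c}) :
    HasFDerivAt f L x :=
  (L.hasFDerivAt.add_const c).congr_of_eventuallyEq (mem_interior_iff_mem_nhds.1 hx)

lemma Differentiable.eq_add_const_of_fderiv_eq {E G : Type*} [NormedAddCommGroup E]
    [NormedSpace ℝ E] [NormedAddCommGroup G] [NormedSpace ℝ G] {f : E → G}
    (hf : Differentiable ℝ f) {L : E →L[ℝ] G} (hL : ∀ x, fderiv ℝ f x = L) {c : G} {x₀ : E}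
    (hx₀ : f x₀ = L x₀ + c) (x : E) : f x = L x + c := by
  have hLc : ∀ x, HasFDerivAt (fun x => L x + c) L x := fun x => L.hasFDerivAt.add_const c
  refine isOpen_univ.eqOn_of_fderiv_eq isPreconnected_univ hf.differentiableOn
    (fun x _ => (hLc x).differentiableAt.differentiableWithinAt) (fun x _ => ?_) (mem_univ x₀)
    hx₀ (mem_univ x)
  rw [hL, (hLc x).fderiv]

lemma ContDiff.fderiv_eq_of_dense_of_mem_range_intCast {ι κ : Type*} [Fintype ι]
    [DecidableEq ι] [Fintype κ] {f : (ι → ℝ) → (κ → ℝ)} (hf : ContDiff ℝ 1 f) {s : Set (ι → ℝ)}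
    (hs : Dense s) (hint : ∀ x ∈ s, ∀ i j, fderiv ℝ f x (Pi.single j 1) i ∈ range ((↑) : ℤ → ℝ))
    (x y : ι → ℝ) : fderiv ℝ f x = fderiv ℝ f y := by
  refine ContinuousLinearMap.coe_injective ((Pi.basisFun ℝ ι).ext fun j => funext fun i => ?_)
  have hentry : Continuous fun z => fderiv ℝ f z (Pi.single j 1) i :=
    (continuous_apply i).comp ((hf.continuous_fderiv one_ne_zero).clm_apply continuous_const)
  simpa only [Pi.basisFun_apply, ContinuousLinearMap.coe_coe] using
    hentry.apply_eq_of_dense_of_mem_range_intCast hs (fun z hz => hint z hz i j) x y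

noncomputable def intMatCLM {n : ℕ} (M : Matrix (Fin n) (Fin n) ℤ) :
    (Fin n → ℝ) →L[ℝ] (Fin n → ℝ) :=
  LinearMap.toContinuousLinearMap (M.map (Int.cast : ℤ → ℝ)).mulVecLin

lemma intMatCLM_apply {n : ℕ} (M : Matrix (Fin n) (Fin n) ℤ) (x : Fin n → ℝ) :
    intMatCLM M x = intMatAct M x := rfl

lemma intMatCLM_apply_single_one {n : ℕ} (M : Matrix (Fin n) (Fin n) ℤ) (i j : Fin n) :
    intMatCLM M (Pi.single j 1) i = M i j := by
  simp [intMatCLM_apply, intMatAct, Matrix.mulVec_single]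

theorem ContDiff.exists_forall_eq_intMatAct_add {n : ℕ} {F : (Fin n → ℝ) → (Fin n → ℝ)}
    (hF : ContDiff ℝ 1 F) {S : Set (Matrix (Fin n) (Fin n) ℤ)}
    (hpiece : ∀ x, ∃ A ∈ S, ∃ m : Fin n → ℤ, F x = intMatAct A x + fun k => (m k : ℝ)) :
    ∃ A ∈ S, ∃ m : Fin n → ℤ, ∀ x, F x = intMatAct A x + fun k => (m k : ℝ) := by
  set piece : S × (Fin n → ℤ) → Set (Fin n → ℝ) :=
    fun p => {x | F x = intMatCLM p.1 x + fun k => (p.2 k : ℝ)}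
  have hdense : Dense (⋃ p, interior (piece p)) := by
    refine dense_iUnion_interior_of_closed (fun p => isClosed_eq hF.continuous (by fun_prop)) ?_
    refine iUnion_eq_univ_iff.2 fun x => ?_
    obtain ⟨A, hA, m, hx⟩ := hpiece x
    exact ⟨(⟨A, hA⟩, m), hx⟩
  have hderiv : ∀ p, ∀ x ∈ interior (piece p), fderiv ℝ F x = intMatCLM p.1 :=
    fun p x hx => (HasFDerivAt.of_mem_interior_setOf_eq_add hx).fderiv
  obtain ⟨x₀, hx₀⟩ := hdense.nonempty
  obtain ⟨⟨⟨A, hA⟩, m⟩, hx₀⟩ := mem_iUnion.1 hx₀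
  have hconst : ∀ x, fderiv ℝ F x = intMatCLM A := fun x => by
    refine (hF.fderiv_eq_of_dense_of_mem_range_intCast hdense (fun z hz i j => ?_) x x₀).trans
      (hderiv _ x₀ hx₀)
    obtain ⟨p, hz⟩ := mem_iUnion.1 hz
    exact ⟨p.1.1 i j, by rw [hderiv p z hz, intMatCLM_apply_single_one]⟩
  exact ⟨A, hA, m, (hF.differentiable one_ne_zero).eq_add_const_of_fderiv_eq hconst
    (interior_subset hx₀ : x₀ ∈ piece _)⟩

theorem stmt1_general (n : ℕ)
    (Γ : Subgroup (Matrix.SpecialLinearGroup (Fin n) ℤ))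
    (F : (Fin n → ℝ) ≃ (Fin n → ℝ))
    (hF : ContDiff ℝ 1 F)
    (horb : ∀ x : Fin n → ℝ, ∃ γ ∈ Γ, ∃ m : Fin n → ℤ,
      F x = intMatAct (γ : Matrix (Fin n) (Fin n) ℤ) x + fun i => (m i : ℝ)) :
    ∃ γ ∈ Γ, ∃ m : Fin n → ℤ, ∀ x : Fin n → ℝ,
      F x = intMatAct (γ : Matrix (Fin n) (Fin n) ℤ) x + fun i => (m i : ℝ) := by
  obtain ⟨_, ⟨γ, hγ, rfl⟩, m, hm⟩ :=
    hF.exists_forall_eq_intMatAct_add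
      (S := (↑) '' (Γ : Set (Matrix.SpecialLinearGroup (Fin n) ℤ))) fun x => by
        obtain ⟨γ, hγ, m, hx⟩ := horb x
        exact ⟨γ, ⟨γ, hγ, rfl⟩, m, hx⟩
  exact ⟨γ, hγ, m, hm⟩

/-- **C¹ OE rigidity of the standard action on the torus (inner version).** Let `Γ` be a
finite index subgroup of `SL_n(ℤ)`, `n ≥ 2`, and let `F : ℝⁿ → ℝⁿ` be a bijection with `F`
and `F⁻¹` of class `C¹` and `F(x + m) - F(x) ∈ ℤⁿ` for all `x ∈ ℝⁿ`, `m ∈ ℤⁿ` (so `F`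
descends to a `C¹` diffeomorphism of the torus `ℝⁿ/ℤⁿ`). If for every `x` there are
`γ ∈ Γ` and `m ∈ ℤⁿ` with `F(x) = γx + m` (the induced torus map preserves every
`Γ`-orbit), then a single `γ ∈ Γ` and `m ∈ ℤⁿ` work for all `x`. -/
theorem stmt1 (n : ℕ) (hn : 2 ≤ n)
    (Γ : Subgroup (Matrix.SpecialLinearGroup (Fin n) ℤ)) (hΓ : Γ.FiniteIndex)
    (F : (Fin n → ℝ) ≃ (Fin n → ℝ))
    (hF : ContDiff ℝ 1 F) (hFsymm : ContDiff ℝ 1 F.symm)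
    (hper : ∀ (x : Fin n → ℝ) (m : Fin n → ℤ),
      ∃ k : Fin n → ℤ, F (x + fun i => (m i : ℝ)) = F x + fun i => (k i : ℝ))
    (horb : ∀ x : Fin n → ℝ, ∃ γ ∈ Γ, ∃ m : Fin n → ℤ,
      F x = intMatAct (γ : Matrix (Fin n) (Fin n) ℤ) x + fun i => (m i : ℝ)) :
    ∃ γ ∈ Γ, ∃ m : Fin n → ℤ, ∀ x : Fin n → ℝ,
      F x = intMatAct (γ : Matrix (Fin n) (Fin n) ℤ) x + fun i => (m i : ℝ) :=
  stmt1_general n Γ F hF horb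
end

section
/- Let X be a nonempty connected, locally connected, locally compact Hausdorff topological space. Let (Y_i)_{i∈ℕ} be a countable family of closed subsets of X with ⋃_{i∈ℕ} Y_i = X, such that for all i ≠ j the intersection Y_i ∩ Y_j is small. Then Y_i = X for some i. -/
open Topology


/-- A subset `A` of a topological space `X` is *small* if it is closed, has empty interior,
and does not locally disconnect `X`: for every connected open `U ⊆ X`, the set `U \ A` is
connected (possibly empty). -/
def SmallSet {X : Type*} [TopologicalSpace X] (A : Set X) : Prop :=
  IsClosed A ∧ interior A = ∅ ∧
    ∀ U : Set X, IsOpen U → IsPreconnected U → IsPreconnected (U \ A)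

/-- **Generalized Sierpinski theorem.** If a nonempty connected, locally connected, locally
compact Hausdorff space is covered by countably many closed sets whose pairwise
intersections are small, then one of the sets is the whole space. -/
theorem stmt2 (X : Type*) [TopologicalSpace X] [Nonempty X] [ConnectedSpace X]
    [LocallyConnectedSpace X] [LocallyCompactSpace X] [T2Space X]
    (Y : ℕ → Set X) (hclosed : ∀ i, IsClosed (Y i))
    (hcover : ⋃ i, Y i = Set.univ)
    (hsmall : ∀ i j, i ≠ j → SmallSet (Y i ∩ Y j)) :
    ∃ i, Y i = Set.univ := by
  classical
  -- interiors of distinct `Y`s are disjoint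
  have hdisj : ∀ i j, i ≠ j → interior (Y i) ∩ interior (Y j) = ∅ := by
    intro i j hij
    have h := (hsmall i j hij).2.1
    rw [interior_inter] at h
    exact h
  set F : Set X := ⋃ j, interior (Y j) with hFdef
  by_cases hB : Fᶜ = ∅
  · -- `F = univ`: connectedness forces a single interior
    have hFu : F = Set.univ := by
      rw [← Set.compl_empty, ← hB, compl_compl]
    obtain ⟨p⟩ := (inferInstance : Nonempty X)
    have hpF : p ∈ F := hFu ▸ Set.mem_univ p
    obtain ⟨l, hpl⟩ := Set.mem_iUnion.1 hpF
    refine ⟨l, ?_⟩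
    set v : Set X := ⋃ j, ⋃ (_ : j ≠ l), interior (Y j) with hvdef
    have hvo : IsOpen v := isOpen_iUnion fun j => isOpen_iUnion fun _ => isOpen_interior
    have hcover2 : (Set.univ : Set X) ⊆ interior (Y l) ∪ v := by
      intro y _
      have hyF : y ∈ F := hFu ▸ Set.mem_univ y
      obtain ⟨m, hym⟩ := Set.mem_iUnion.1 hyF
      by_cases hml : m = l
      · exact Or.inl (hml ▸ hym)
      · exact Or.inr (Set.mem_iUnion.2 ⟨m, Set.mem_iUnion.2 ⟨hml, hym⟩⟩)
    have hvempty : ¬ (Set.univ ∩ v : Set X).Nonempty := by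
      rintro hvn
      obtain ⟨z, -, hz⟩ := isPreconnected_univ (interior (Y l)) v isOpen_interior hvo
        hcover2 ⟨p, Set.mem_univ p, hpl⟩ hvn
      obtain ⟨hz1, hz2⟩ := hz
      obtain ⟨m, hm⟩ := Set.mem_iUnion.1 hz2
      obtain ⟨hml, hzm⟩ := Set.mem_iUnion.1 hm
      have : z ∈ interior (Y l) ∩ interior (Y m) := ⟨hz1, hzm⟩
      rw [hdisj l m (Ne.symm hml)] at this
      exact this
    apply Set.eq_univ_iff_forall.2
    intro y
    rcases hcover2 (Set.mem_univ y) with h | h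
    · exact interior_subset h
    · exact absurd ⟨y, Set.mem_univ y, h⟩ hvempty
  · -- main case: the "free boundary" `B = Fᶜ` is nonempty; derive a contradiction
    exfalso
    set B : Set X := Fᶜ with hBdef
    have hBclosed : IsClosed B :=
      (isOpen_iUnion fun j => isOpen_interior).isClosed_compl
    have hBne : B.Nonempty := Set.nonempty_iff_ne_empty.2 hB
    haveI hBsub : Nonempty ↥B := hBne.to_subtype
    haveI : LocallyCompactSpace ↥B := hBclosed.locallyCompactSpace
    -- Baire on `B`
    have hcovB : (⋃ l, (Subtype.val ⁻¹' Y l : Set ↥B)) = Set.univ := by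
      apply Set.eq_univ_iff_forall.2
      intro x
      have hx : (x : X) ∈ ⋃ l, Y l := hcover ▸ Set.mem_univ _
      obtain ⟨l, h⟩ := Set.mem_iUnion.1 hx
      exact Set.mem_iUnion.2 ⟨l, h⟩
    obtain ⟨l, x₀b, hx₀i⟩ := nonempty_interior_of_iUnion_of_closed
      (fun l => (hclosed l).preimage continuous_subtype_val) hcovB
    have hnhds : (Subtype.val ⁻¹' Y l : Set ↥B) ∈ 𝓝 x₀b :=
      mem_interior_iff_mem_nhds.1 hx₀i
    rw [mem_nhds_subtype] at hnhds
    obtain ⟨t, ht, hts⟩ := hnhds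
    set x₀ : X := (x₀b : X) with hx₀def
    have hx₀B : x₀ ∈ B := x₀b.2
    have hO''x : x₀ ∈ interior t := mem_interior_iff_mem_nhds.2 ht
    have hO''B : interior t ∩ B ⊆ Y l := by
      intro y hy
      exact hts (show ((⟨y, hy.2⟩ : ↥B) : X) ∈ t from interior_subset hy.1)
    -- pass to the connected component `O` of `x₀` in `interior t`
    set O : Set X := connectedComponentIn (interior t) x₀ with hOdef
    have hOopen : IsOpen O := isOpen_interior.connectedComponentIn
    have hOx₀ : x₀ ∈ O := mem_connectedComponentIn hO''x
    have hOsub : O ⊆ interior t := connectedComponentIn_subset _ _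
    have hOconn : IsPreconnected O := isPreconnected_connectedComponentIn
    have hOB : O ∩ B ⊆ Y l := fun y hy => hO''B ⟨hOsub hy.1, hy.2⟩
    -- key claim: `O` does not meet the interior of any other `Y j`
    have hmain : ∀ j, j ≠ l → ∀ x, x ∈ O → x ∉ interior (Y j) := by
      intro j hjl x hxO hxj
      set P : Set X := connectedComponentIn (interior (Y j)) x with hPdef
      have hPopen : IsOpen P := isOpen_interior.connectedComponentIn
      have hPx : x ∈ P := mem_connectedComponentIn hxj
      have hPsub : P ⊆ interior (Y j) := connectedComponentIn_subset _ _
      obtain ⟨hAc, hAint, hAconn⟩ := hsmall l j (Ne.symm hjl)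
      set A : Set X := Y l ∩ Y j with hAdef
      -- boundary sub-lemma: closure points of `P` inside `O \ A` belong to `P`
      have hbd : ∀ y, y ∈ closure P → y ∈ O → y ∉ A → y ∈ P := by
        intro y hyc hyO hyA
        by_contra hyP
        by_cases hyF : y ∈ F
        · obtain ⟨m, hym⟩ := Set.mem_iUnion.1 hyF
          by_cases hmj : m = j
          · subst hmj
            set P' : Set X := connectedComponentIn (interior (Y m)) y with hP'def
            have hP'open : IsOpen P' := isOpen_interior.connectedComponentIn
            have hP'y : y ∈ P' := mem_connectedComponentIn hym
            obtain ⟨z, hz1, hz2⟩ := _root_.mem_closure_iff.1 hyc P' hP'open hP'y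
            have e1 : P' = connectedComponentIn (interior (Y m)) z :=
              connectedComponentIn_eq hz1
            have e2 : P = connectedComponentIn (interior (Y m)) z :=
              connectedComponentIn_eq hz2
            exact hyP (e2 ▸ e1 ▸ hP'y)
          · obtain ⟨z, hz1, hz2⟩ := _root_.mem_closure_iff.1 hyc (interior (Y m))
              isOpen_interior hym
            have : z ∈ interior (Y m) ∩ interior (Y j) := ⟨hz1, hPsub hz2⟩
            rw [hdisj m j hmj] at this
            exact this
        · -- `y ∈ B ∩ O ⊆ Y l` and `y ∈ closure P ⊆ Y j`, so `y ∈ A`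
          have hyl : y ∈ Y l := hOB ⟨hyO, hyF⟩
          have hyj : y ∈ Y j := by
            have h1 : closure P ⊆ closure (interior (Y j)) := closure_mono hPsub
            have h2 : closure (interior (Y j)) ⊆ Y j :=
              closure_minimal interior_subset (hclosed j)
            exact h2 (h1 hyc)
          exact hyA ⟨hyl, hyj⟩
      set S : Set X := (P ∩ O) \ A with hSdef
      have hSsubP : S ⊆ P := fun y hy => hy.1.1
      have hSopen : IsOpen S := (hPopen.inter hOopen).sdiff hAc
      have hSne : S.Nonempty := by
        rw [Set.nonempty_iff_ne_empty]
        intro h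
        have hsub : P ∩ O ⊆ A := Set.diff_eq_empty.1 h
        have : P ∩ O ⊆ interior A := interior_maximal hsub (hPopen.inter hOopen)
        rw [hAint] at this
        exact this ⟨hPx, hxO⟩
      have hmemS : ∀ y, y ∈ O \ A → y ∈ closure S → y ∈ S := by
        intro y hy hyc
        have hyP : y ∈ P := hbd y (closure_mono hSsubP hyc) hy.1 hy.2
        exact ⟨⟨hyP, hy.1⟩, hy.2⟩
      have hcover' : O \ A ⊆ S ∪ (closure S)ᶜ := by
        intro y hy
        by_cases hyc : y ∈ closure S
        · exact Or.inl (hmemS y hy hyc)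
        · exact Or.inr hyc
      have hOA : IsPreconnected (O \ A) := hAconn O hOopen hOconn
      obtain ⟨y₀, hy₀S⟩ := hSne
      have hy₀OA : y₀ ∈ O \ A := ⟨hy₀S.1.2, hy₀S.2⟩
      have hv : ¬ ((O \ A) ∩ (closure S)ᶜ).Nonempty := by
        intro hvne
        obtain ⟨z, -, hz1, hz2⟩ := hOA S (closure S)ᶜ hSopen isClosed_closure.isOpen_compl
          hcover' ⟨y₀, hy₀OA, hy₀S⟩ hvne
        exact hz2 (subset_closure hz1)
      have hOAS : O \ A ⊆ S := by
        intro y hy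
        rcases hcover' hy with h | h
        · exact h
        · exact absurd ⟨y, hy, h⟩ hv
      have hOYj : O ⊆ Y j := by
        intro y hy
        by_cases hyA : y ∈ A
        · exact hyA.2
        · exact interior_subset (hPsub (hSsubP (hOAS ⟨hy, hyA⟩)))
      have : x₀ ∈ interior (Y j) := interior_maximal hOYj hOopen hOx₀
      exact hx₀B (Set.mem_iUnion.2 ⟨j, this⟩)
    -- conclude: `O ⊆ Y l`, hence `x₀ ∈ F`, contradiction
    have hOYl : O ⊆ Y l := by
      intro y hy
      by_cases hyF : y ∈ F
      · obtain ⟨m, hym⟩ := Set.mem_iUnion.1 hyF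
        by_cases hml : m = l
        · exact interior_subset (hml ▸ hym)
        · exact absurd hym (hmain m hml y hy)
      · exact hOB ⟨hy, hyF⟩
    have : x₀ ∈ F := Set.mem_iUnion.2 ⟨l, interior_maximal hOYl hOopen hOx₀⟩
    exact hx₀B this
end

section
/- Let X be a nonempty connected, locally connected, locally compact Hausdorff topological space, and let Γ be a countable group acting on X by homeomorphisms such that for every γ ≠ 1 in Γ the fixed set Fix(γ) = {x ∈ X : γ·x = x} is small. Then for every homeomorphism f : X → X satisfying f(x) ∈ Γ·x for all x ∈ X, there exists γ ∈ Γ such that f(x) = γ·x for all x ∈ X. -/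
/-- **Small fixed sets implies rigid.** If a countable group `Γ` acts by homeomorphisms on
a nonempty connected, locally connected, locally compact Hausdorff space `X` with
`Fix(γ)` small for every `γ ≠ 1`, then every inner orbit equivalence of `(X, Γ)` is given
by a single element of `Γ`. -/
theorem stmt3 (X : Type*) [TopologicalSpace X] [Nonempty X] [ConnectedSpace X]
    [LocallyConnectedSpace X] [LocallyCompactSpace X] [T2Space X]
    (Γ : Type*) [Group Γ] [Countable Γ] [MulAction Γ X]
    (hcont : ∀ γ : Γ, Continuous fun x : X => γ • x)
    (hfix : ∀ γ : Γ, γ ≠ 1 → SmallSet {x : X | γ • x = x})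
    (f : X ≃ₜ X) (hf : ∀ x : X, f x ∈ MulAction.orbit Γ x) :
    ∃ γ : Γ, ∀ x : X, f x = γ • x := by
  classical
  set E : Γ → Set X := fun γ => {x : X | f x = γ • x} with hEdef
  have hEclosed : ∀ γ : Γ, IsClosed (E γ) := fun γ => isClosed_eq f.continuous (hcont γ)
  have hEcover : ∀ x : X, ∃ γ : Γ, x ∈ E γ := by
    intro x
    rcases MulAction.mem_orbit_iff.mp (hf x) with ⟨γ, hγ⟩
    exact ⟨γ, hγ.symm⟩
  -- intersections of distinct E's sit inside small sets
  have key : ∀ γ δ : Γ, γ ≠ δ → ∃ A : Set X, SmallSet A ∧ E γ ∩ E δ ⊆ A := by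
    intro γ δ h
    refine ⟨{x : X | (δ⁻¹ * γ) • x = x}, hfix _ ?_, ?_⟩
    · intro hc
      exact h (inv_mul_eq_one.mp hc).symm
    · rintro x ⟨h1, h2⟩
      show (δ⁻¹ * γ) • x = x
      rw [mul_smul, ← h1, h2, inv_smul_smul]
  set V : Γ → Set X := fun γ => interior (E γ) with hVdef
  have hVopen : ∀ γ, IsOpen (V γ) := fun γ => isOpen_interior
  have hclVE : ∀ γ, closure (V γ) ⊆ E γ := fun γ =>
    closure_minimal interior_subset (hEclosed γ)
  have hVdisj : ∀ γ δ : Γ, γ ≠ δ → V γ ∩ V δ = ∅ := by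
    intro γ δ h
    rcases key γ δ h with ⟨A, hA, hsub⟩
    have h1 : V γ ∩ V δ ⊆ interior A := by
      rw [hVdef]
      rw [← interior_inter]
      exact interior_mono hsub
    rw [hA.2.1] at h1
    exact Set.subset_empty_iff.mp h1
  have hclV_V : ∀ γ δ : Γ, γ ≠ δ → closure (V γ) ∩ V δ = ∅ := by
    intro γ δ h
    apply Set.eq_empty_iff_forall_notMem.mpr
    rintro x ⟨hx1, hx2⟩
    rcases mem_closure_iff.mp hx1 (V δ) (hVopen δ) hx2 with ⟨y, hy1, hy2⟩
    have : y ∈ V γ ∩ V δ := ⟨hy2, hy1⟩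
    rw [hVdisj γ δ h] at this
    exact this
  -- density of the union of patches
  have hcoverU : (⋃ γ, E γ) = Set.univ := by
    ext x; simp only [Set.mem_iUnion, Set.mem_univ, iff_true]; exact hEcover x
  have hD : Dense (⋃ γ, V γ) := dense_iUnion_interior_of_closed hEclosed hcoverU
  -- The residual set F
  set F : Set X := (⋃ γ, V γ)ᶜ with hFdef
  have hFclosed : IsClosed F := (isOpen_iUnion hVopen).isClosed_compl
  have hFV : ∀ γ, ∀ x ∈ F, x ∉ V γ := by
    intro γ x hx hxV
    exact hx (Set.mem_iUnion.mpr ⟨γ, hxV⟩)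
  -- boundary points of patches are in F
  have hbdF : ∀ δ : Γ, ∀ y, y ∈ closure (V δ) → y ∉ V δ → y ∈ F := by
    intro δ y hy1 hy2 hy3
    rcases Set.mem_iUnion.mp hy3 with ⟨ρ, hρ⟩
    by_cases h : δ = ρ
    · exact hy2 (h ▸ hρ)
    · have : y ∈ closure (V δ) ∩ V ρ := ⟨hy1, hρ⟩
      rw [hclV_V δ ρ h] at this
      exact this
  -- key local lemma: open N inside closure of V δ forces N ⊆ V δ
  have hintcl : ∀ δ : Γ, ∀ N : Set X, IsOpen N → N ⊆ closure (V δ) → N ⊆ V δ := by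
    intro δ N hN hsub
    have h1 : N ⊆ interior (closure (V δ)) := hN.subset_interior_iff.mpr hsub
    exact h1.trans (interior_mono (hclVE δ))
  -- main claim: F is empty
  have hFempty : F = ∅ := by
    by_contra hne
    rcases Set.eq_empty_or_nonempty F with h | ⟨z₀, hz₀⟩
    · exact hne h
    haveI : Nonempty F := ⟨⟨z₀, hz₀⟩⟩
    haveI : LocallyCompactSpace F := hFclosed.locallyCompactSpace
    -- Baire on F with the closed cover E γ ∩ F
    have hdenseF : Dense (⋃ γ : Γ, interior ((fun y : F => (y : X)) ⁻¹' E γ)) := by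
      apply dense_iUnion_interior_of_closed
      · exact fun γ => (hEclosed γ).preimage continuous_subtype_val
      · ext y; simp only [Set.mem_iUnion, Set.mem_univ, iff_true, Set.mem_preimage]
        exact hEcover y
    rcases hdenseF.nonempty with ⟨y, hy⟩
    rcases Set.mem_iUnion.mp hy with ⟨γ₀, hyγ⟩
    rcases mem_interior.mp hyγ with ⟨t, htsub, htopen, hyt⟩
    rcases isOpen_induced_iff.mp htopen with ⟨O, hOopen, hOt⟩
    -- O is open in X, y.val ∈ O, and F ∩ O ⊆ E γ₀
    have hOF : ∀ x : X, x ∈ F → x ∈ O → x ∈ E γ₀ := by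
      intro x hxF hxO
      have : (⟨x, hxF⟩ : F) ∈ t := by rw [← hOt]; exact hxO
      exact htsub this
    have hyO : (y : X) ∈ O := by rw [← hOt] at hyt; exact hyt
    -- Step A: no point of O ∩ F lies in closure (V δ) for δ ≠ γ₀
    have stepA : ∀ z : X, z ∈ F → z ∈ O → ∀ δ : Γ, δ ≠ γ₀ → z ∉ closure (V δ) := by
      intro z hzF hzO δ hδ hzc
      rcases (locallyConnectedSpace_iff_subsets_isOpen_isConnected.mp ‹_› z O
        (hOopen.mem_nhds hzO)) with ⟨N, hNO, hNopen, hzN, hNconn⟩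
      rcases key γ₀ δ (Ne.symm hδ) with ⟨A, hA, hsubA⟩
      set C : Set X := N \ A with hCdef
      have hCopen : IsOpen C := hNopen.sdiff hA.1
      have hCpre : IsPreconnected C := hA.2.2 N hNopen hNconn.isPreconnected
      -- boundary points of V δ inside C are impossible
      have hbd : ∀ w ∈ C, w ∈ closure (V δ) → w ∈ V δ := by
        intro w hwC hwc
        by_contra hwV
        have hwF : w ∈ F := hbdF δ w hwc hwV
        have hw1 : w ∈ E γ₀ := hOF w hwF (hNO hwC.1)
        have hw2 : w ∈ E δ := hclVE δ hwc
        exact hwC.2 (hsubA ⟨hw1, hw2⟩)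
      have hsplit : C ⊆ V δ ∪ (closure (V δ))ᶜ := by
        intro w hw
        by_cases h : w ∈ closure (V δ)
        · exact Or.inl (hbd w hw h)
        · exact Or.inr h
      have hne1 : (C ∩ V δ).Nonempty := by
        rcases mem_closure_iff.mp hzc N hNopen hzN with ⟨w, hw1, hw2⟩
        have hop : IsOpen (N ∩ V δ) := hNopen.inter (hVopen δ)
        have hnsub : ¬ (N ∩ V δ ⊆ A) := by
          intro hsub
          have : N ∩ V δ ⊆ interior A := hop.subset_interior_iff.mpr hsub
          rw [hA.2.1] at this
          exact this ⟨hw1, hw2⟩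
        rcases Set.not_subset.mp hnsub with ⟨w', hw', hw'A⟩
        exact ⟨w', ⟨hw'.1, hw'A⟩, hw'.2⟩
      have hCsub : C ⊆ V δ := by
        have hne2 : C ∩ (closure (V δ))ᶜ = ∅ := by
          by_contra h2
          rcases Set.nonempty_iff_ne_empty.mpr h2 with ⟨w, hw1, hw2⟩
          have := hCpre (V δ) (closure (V δ))ᶜ (hVopen δ) (isClosed_closure).isOpen_compl
            hsplit hne1 ⟨w, hw1, hw2⟩
          rcases this with ⟨u, _, hu2, hu3⟩
          exact hu3 (subset_closure hu2)
        intro w hw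
        rcases hsplit hw with h | h
        · exact h
        · exact absurd (Set.eq_empty_iff_forall_notMem.mp hne2 w ⟨hw, h⟩) not_false
      -- N ⊆ closure (V δ)
      have hNcl : N ⊆ closure (V δ) := by
        intro n hn
        rw [mem_closure_iff]
        intro O' hO' hnO'
        have hop : IsOpen (O' ∩ N) := hO'.inter hNopen
        have hnsub : ¬ (O' ∩ N ⊆ A) := by
          intro hsub
          have : O' ∩ N ⊆ interior A := hop.subset_interior_iff.mpr hsub
          rw [hA.2.1] at this
          exact this ⟨hnO', hn⟩
        rcases Set.not_subset.mp hnsub with ⟨w, hw, hwA⟩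
        exact ⟨w, hw.1, hCsub ⟨hw.2, hwA⟩⟩
      exact hFV δ z hzF (hintcl δ N hNopen hNcl hzN)
    -- Step B: around y, every patch other than γ₀ is absent, forcing y ∈ V γ₀
    rcases (locallyConnectedSpace_iff_subsets_isOpen_isConnected.mp ‹_› (y : X) O
      (hOopen.mem_nhds hyO)) with ⟨N, hNO, hNopen, hyN, hNconn⟩
    have hVN : ∀ δ : Γ, δ ≠ γ₀ → N ∩ V δ = ∅ := by
      intro δ hδ
      by_contra h2
      rcases Set.nonempty_iff_ne_empty.mpr h2 with ⟨w, hw1, hw2⟩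
      have hsplit : N ⊆ V δ ∪ (closure (V δ))ᶜ := by
        intro n hn
        by_cases h : n ∈ closure (V δ)
        · by_cases h' : n ∈ V δ
          · exact Or.inl h'
          · have hnF : n ∈ F := hbdF δ n h h'
            exact absurd h (stepA n hnF (hNO hn) δ hδ)
        · exact Or.inr h
      have hNcl : N ⊆ closure (V δ) := by
        have hne2 : N ∩ (closure (V δ))ᶜ = ∅ := by
          by_contra h3
          rcases Set.nonempty_iff_ne_empty.mpr h3 with ⟨u, hu1, hu2⟩
          have := hNconn.isPreconnected (V δ) (closure (V δ))ᶜ (hVopen δ)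
            (isClosed_closure).isOpen_compl hsplit ⟨w, hw1, hw2⟩ ⟨u, hu1, hu2⟩
          rcases this with ⟨v, _, hv2, hv3⟩
          exact hv3 (subset_closure hv2)
        intro n hn
        by_contra h
        exact absurd (Set.eq_empty_iff_forall_notMem.mp hne2 n ⟨hn, h⟩) not_false
      exact hFV δ (y : X) y.2 (hintcl δ N hNopen hNcl hyN)
    have hNcl : N ⊆ closure (V γ₀) := by
      intro n hn
      rw [mem_closure_iff]
      intro O' hO' hnO'
      have hop : IsOpen (O' ∩ N) := hO'.inter hNopen
      rcases hD.inter_open_nonempty (O' ∩ N) hop ⟨n, hnO', hn⟩ with ⟨w, hw1, hw2⟩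
      rcases Set.mem_iUnion.mp hw2 with ⟨ρ, hρ⟩
      by_cases h : ρ = γ₀
      · exact ⟨w, hw1.1, h ▸ hρ⟩
      · exact absurd (Set.eq_empty_iff_forall_notMem.mp (hVN ρ h) w ⟨hw1.2, hρ⟩) not_false
    exact hFV γ₀ (y : X) y.2 (hintcl γ₀ N hNopen hNcl hyN)
  -- F empty: X is covered by the disjoint open patches
  have hXcover : (⋃ γ, V γ) = Set.univ := by
    rw [← Set.compl_empty_iff, ← hFdef] at *
    exact hFempty
  obtain ⟨x₀⟩ := (inferInstance : Nonempty X)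
  have hx₀ : x₀ ∈ ⋃ γ, V γ := hXcover ▸ Set.mem_univ x₀
  rcases Set.mem_iUnion.mp hx₀ with ⟨γ, hγ⟩
  -- V γ is clopen, hence univ
  have hcomp : (V γ)ᶜ = ⋃ δ ∈ {δ : Γ | δ ≠ γ}, V δ := by
    ext x
    constructor
    · intro hx
      have : x ∈ ⋃ δ, V δ := hXcover ▸ Set.mem_univ x
      rcases Set.mem_iUnion.mp this with ⟨δ, hδ⟩
      refine Set.mem_biUnion (show δ ∈ {δ : Γ | δ ≠ γ} from ?_) hδ
      intro h
      exact hx (h ▸ hδ)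
    · intro hx hxV
      rcases Set.mem_iUnion₂.mp hx with ⟨δ, hδ1, hδ2⟩
      have : x ∈ V δ ∩ V γ := ⟨hδ2, hxV⟩
      rw [hVdisj δ γ hδ1] at this
      exact this
  have hclopen : IsClopen (V γ) := by
    constructor
    · rw [← isOpen_compl_iff, hcomp]
      exact isOpen_biUnion fun δ _ => hVopen δ
    · exact hVopen γ
  have huniv : V γ = Set.univ := by
    rcases isClopen_iff.mp hclopen with h | h
    · rw [h] at hγ; exact absurd hγ not_false
    · exact h
  refine ⟨γ, fun x => ?_⟩
  have hx : x ∈ V γ := huniv ▸ Set.mem_univ x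
  have hx2 : x ∈ E γ := interior_subset hx
  exact hx2
end

section
/- Let X be a nonempty connected, locally connected, locally compact Hausdorff topological space, and let Γ be a countable group acting on X by homeomorphisms such that for every γ ≠ 1 in Γ the fixed set Fix(γ) = {x ∈ X : γ·x = x} is small. Let X' be a topological space with an action of a group Γ' by homeomorphisms, and let f : X' → X be a homeomorphism mapping each Γ'-orbit onto a Γ-orbit, i.e., f(Γ'·y) = Γ·f(y) for every y ∈ X'. Then f is equivariant: for every γ' ∈ Γ' there exists γ ∈ Γ such that f(γ'·y) = γ·f(y) for all y ∈ X'. -/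
open Set

lemma smallSet_empty {X : Type*} [TopologicalSpace X] : SmallSet (∅ : Set X) :=
  ⟨isClosed_empty, interior_empty, fun U _hU hUc => by simpa [Set.diff_empty] using hUc⟩

/-- Recursion-with-choice helper. -/
lemma exists_seq_of_step {α : Type*} {P : α → Prop} {R : ℕ → α → α → Prop} (a0 : α) (h0 : P a0)
    (step : ∀ n a, P a → ∃ b, P b ∧ R n a b) :
    ∃ seq : ℕ → α, seq 0 = a0 ∧ (∀ n, P (seq n)) ∧ ∀ n, R n (seq n) (seq (n + 1)) := by
  choose f hf1 hf2 using step
  let F : ℕ → {a // P a} := fun n => Nat.rec ⟨a0, h0⟩ (fun n p => ⟨f n p.1 p.2, hf1 n p.1 p.2⟩) n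
  exact ⟨fun n => (F n).1, rfl, fun n => (F n).2, fun n => hf2 n (F n).1 (F n).2⟩

section Topology

variable {X : Type*} [TopologicalSpace X] [T2Space X]

/-- Around each point of an open set there is an open preconnected neighborhood with
compact closure contained in the open set. -/
lemma exists_good_nbhd [LocallyCompactSpace X] [LocallyConnectedSpace X]
    {W : Set X} (hW : IsOpen W) {x : X} (hx : x ∈ W) :
    ∃ N : Set X, IsOpen N ∧ IsPreconnected N ∧ x ∈ N ∧ IsCompact (closure N) ∧ closure N ⊆ W := by
  obtain ⟨K, hKc, hxK, hKW⟩ := exists_compact_subset hW hx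
  have hsub : closure (connectedComponentIn (interior K) x) ⊆ K := by
    refine (hKc.isClosed.closure_subset_iff).mpr ?_
    exact (connectedComponentIn_subset _ _).trans interior_subset
  exact ⟨connectedComponentIn (interior K) x, isOpen_interior.connectedComponentIn,
    isPreconnected_connectedComponentIn, mem_connectedComponentIn hxK,
    hKc.of_isClosed_subset isClosed_closure hsub, hsub.trans hKW⟩

/-- Any two points of an open preconnected set lie in a common open preconnected subset with
compact closure contained in the set. -/
lemma exists_chain_set [LocallyCompactSpace X] [LocallyConnectedSpace X]
    {W : Set X} (hW : IsOpen W) (hWc : IsPreconnected W) {x y : X} (hx : x ∈ W) (hy : y ∈ W) :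
    ∃ K : Set X, IsOpen K ∧ IsPreconnected K ∧ IsCompact (closure K) ∧ closure K ⊆ W ∧
      x ∈ K ∧ y ∈ K := by
  set P : Set X → Prop := fun K => IsOpen K ∧ IsPreconnected K ∧ IsCompact (closure K) ∧
      closure K ⊆ W ∧ x ∈ K with hP
  set S : Set X := ⋃₀ {K | P K} with hS
  have hSopen : IsOpen S := isOpen_sUnion fun K hK => hK.1
  have claim : ∀ z ∈ W, z ∈ closure S → z ∈ S := by
    intro z hzW hzcl
    obtain ⟨N, hNo, hNc, hzN, hNcomp, hNW⟩ := exists_good_nbhd hW hzW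
    obtain ⟨w, hwN, hwS⟩ : (N ∩ S).Nonempty := mem_closure_iff.1 hzcl N hNo hzN
    obtain ⟨K, hK, hwK⟩ := hwS
    refine mem_sUnion.2 ⟨K ∪ N, ⟨hK.1.union hNo,
      IsPreconnected.union w hwK hwN hK.2.1 hNc, ?_, ?_, Or.inl hK.2.2.2.2⟩, Or.inr hzN⟩
    · rw [closure_union]; exact hK.2.2.1.union hNcomp
    · rw [closure_union]; exact union_subset hK.2.2.2.1 hNW
  have hxS : x ∈ S := by
    obtain ⟨N, hNo, hNc, hxN, hNcomp, hNW⟩ := exists_good_nbhd hW hx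
    exact ⟨N, ⟨hNo, hNc, hNcomp, hNW, hxN⟩, hxN⟩
  have hWS : W ⊆ S := by
    intro z hzW
    by_cases hz : z ∈ closure S
    · exact claim z hzW hz
    · exfalso
      have hsub : W ⊆ S ∪ (closure S)ᶜ := by
        intro w hw
        by_cases hwc : w ∈ closure S
        · exact Or.inl (claim w hw hwc)
        · exact Or.inr hwc
      obtain ⟨w, hw⟩ := hWc S (closure S)ᶜ hSopen isClosed_closure.isOpen_compl hsub
        ⟨x, hx, hxS⟩ ⟨z, hzW, hz⟩
      exact hw.2.2 (subset_closure hw.2.1)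
  obtain ⟨K, hK, hyK⟩ := hWS hy
  exact ⟨K, hK.1, hK.2.1, hK.2.2.1, hK.2.2.2.1, hK.2.2.2.2, hyK⟩

/-- A nested intersection of nonempty compact preconnected sets is preconnected. -/
lemma isPreconnected_iInter_nested {C : ℕ → Set X}
    (hcomp : ∀ n, IsCompact (C n)) (hconn : ∀ n, IsPreconnected (C n))
    (hne : ∀ n, (C n).Nonempty) (hdec : ∀ n, C (n + 1) ⊆ C n) :
    IsPreconnected (⋂ n, C n) := by
  rintro u v hu hv hsub ⟨a, haC, hau⟩ ⟨b, hbC, hbv⟩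
  by_contra hfalse
  rw [not_nonempty_iff_eq_empty] at hfalse
  have hIclosed : IsClosed (⋂ n, C n) := isClosed_iInter fun n => (hcomp n).isClosed
  have h1 : (⋂ n, C n) ∩ u = (⋂ n, C n) \ v := by
    ext w
    constructor
    · rintro ⟨hw, hwu⟩
      refine ⟨hw, fun hwv => ?_⟩
      have : w ∈ (⋂ n, C n) ∩ (u ∩ v) := ⟨hw, hwu, hwv⟩
      simp [hfalse] at this
    · rintro ⟨hw, hwv⟩
      rcases hsub hw with h | h
      · exact ⟨hw, h⟩
      · exact absurd h hwv
  have h2 : (⋂ n, C n) ∩ v = (⋂ n, C n) \ u := by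
    ext w
    constructor
    · rintro ⟨hw, hwv⟩
      refine ⟨hw, fun hwu => ?_⟩
      have : w ∈ (⋂ n, C n) ∩ (u ∩ v) := ⟨hw, hwu, hwv⟩
      simp [hfalse] at this
    · rintro ⟨hw, hwu⟩
      rcases hsub hw with h | h
      · exact absurd h hwu
      · exact ⟨hw, h⟩
  have hKu : IsCompact ((⋂ n, C n) ∩ u) := by
    rw [h1]
    exact ((hcomp 0).of_isClosed_subset (hIclosed.sdiff hv)
      ((diff_subset).trans (iInter_subset _ 0)))
  have hKv : IsCompact ((⋂ n, C n) ∩ v) := by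
    rw [h2]
    exact ((hcomp 0).of_isClosed_subset (hIclosed.sdiff hu)
      ((diff_subset).trans (iInter_subset _ 0)))
  have hdisj : Disjoint ((⋂ n, C n) ∩ u) ((⋂ n, C n) ∩ v) := by
    rw [Set.disjoint_left]
    rintro w ⟨hw, hwu⟩ ⟨_, hwv⟩
    have : w ∈ (⋂ n, C n) ∩ (u ∩ v) := ⟨hw, hwu, hwv⟩
    simp [hfalse] at this
  obtain ⟨u', v', hu'o, hv'o, hsu, hsv, hu'v'⟩ :=
    SeparatedNhds.of_isCompact_isCompact hKu hKv hdisj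
  set D : ℕ → Set X := fun n => C n \ (u' ∪ v') with hD
  have hDclosed : ∀ n, IsClosed (D n) := fun n => (hcomp n).isClosed.sdiff (hu'o.union hv'o)
  have hDdec : ∀ n, D (n + 1) ⊆ D n := fun n => diff_subset_diff_left (hdec n)
  have hDempty : ¬ ∀ n, (D n).Nonempty := by
    intro hall
    obtain ⟨w, hw⟩ := IsCompact.nonempty_iInter_of_sequence_nonempty_isCompact_isClosed
      D hDdec hall ((hcomp 0).of_isClosed_subset (hDclosed 0) diff_subset) hDclosed
    have hwC : w ∈ ⋂ n, C n := by
      refine mem_iInter.mpr fun n => ?_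
      exact (mem_iInter.mp hw n).1
    have hwuv : w ∉ u' ∪ v' := (mem_iInter.mp hw 0).2
    rcases hsub hwC with h | h
    · exact hwuv (Or.inl (hsu ⟨hwC, h⟩))
    · exact hwuv (Or.inr (hsv ⟨hwC, h⟩))
  push_neg at hDempty
  obtain ⟨n, hn⟩ := hDempty
  have hsub' : C n ⊆ u' ∪ v' := by
    intro w hw
    by_contra hwn
    exact absurd (show w ∈ D n from ⟨hw, hwn⟩) (by simp [hn])
  obtain ⟨w, hw⟩ := hconn n u' v' hu'o hv'o hsub'
    ⟨a, mem_iInter.mp haC n, hsu ⟨haC, hau⟩⟩ ⟨b, mem_iInter.mp hbC n, hsv ⟨hbC, hbv⟩⟩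
  exact (hu'v'.ne_of_mem hw.2.1 hw.2.2) rfl

/-- Two points of an open preconnected set avoiding a countable family of small sets can be
joined by a compact preconnected set avoiding the family. -/
lemma exists_continuum_avoiding [LocallyCompactSpace X] [LocallyConnectedSpace X]
    {W : Set X} (hW : IsOpen W) (hWc : IsPreconnected W)
    {A : ℕ → Set X} (hA : ∀ n, SmallSet (A n))
    {x y : X} (hx : x ∈ W) (hy : y ∈ W) (hxA : ∀ n, x ∉ A n) (hyA : ∀ n, y ∉ A n) :
    ∃ C : Set X, IsCompact C ∧ IsPreconnected C ∧ C ⊆ W ∧ x ∈ C ∧ y ∈ C ∧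
      ∀ n, C ∩ A n = ∅ := by
  set P : Set X → Prop := fun K => IsOpen K ∧ IsPreconnected K ∧ IsCompact (closure K) ∧
      x ∈ K ∧ y ∈ K with hPdef
  obtain ⟨K0, h1, h2, h3, h4, h5, h6⟩ := exists_chain_set hW hWc hx hy
  have h0 : P K0 := ⟨h1, h2, h3, h5, h6⟩
  have step : ∀ n K, P K → ∃ K', P K' ∧ closure K' ⊆ K \ A n := by
    intro n K hK
    have hopen : IsOpen (K \ A n) := hK.1.sdiff (hA n).1
    have hpre : IsPreconnected (K \ A n) := (hA n).2.2 K hK.1 hK.2.1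
    obtain ⟨K', c1, c2, c3, c4, c5, c6⟩ := exists_chain_set hopen hpre
      ⟨hK.2.2.2.1, hxA n⟩ ⟨hK.2.2.2.2, hyA n⟩
    exact ⟨K', ⟨c1, c2, c3, c5, c6⟩, c4⟩
  obtain ⟨seq, hseq0, hseqP, hseqR⟩ := exists_seq_of_step K0 h0 step
  have hdec : ∀ n, closure (seq (n + 1)) ⊆ closure (seq n) :=
    fun n => (hseqR n).trans (diff_subset.trans subset_closure)
  refine ⟨⋂ n, closure (seq n), ?_, ?_, ?_, ?_, ?_, ?_⟩
  · exact (hseqP 0).2.2.1.of_isClosed_subset (isClosed_iInter fun n => isClosed_closure)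
      (iInter_subset _ 0)
  · exact isPreconnected_iInter_nested (fun n => (hseqP n).2.2.1)
      (fun n => (hseqP n).2.1.closure)
      (fun n => ⟨x, subset_closure (hseqP n).2.2.2.1⟩) hdec
  · exact (iInter_subset _ 0).trans (by rw [hseq0]; exact h4)
  · exact mem_iInter.mpr fun n => subset_closure (hseqP n).2.2.2.1
  · exact mem_iInter.mpr fun n => subset_closure (hseqP n).2.2.2.2
  · intro n
    rw [eq_empty_iff_forall_notMem]
    rintro w ⟨hw, hwA⟩
    exact ((hseqR n) (mem_iInter.mp hw (n + 1))).2 hwA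

/-- Boundary bumping: the connected component of `z` in `C \ U` reaches the closure of `U`. -/
lemma bumping {C U : Set X} (hC : IsCompact C) (hCc : IsPreconnected C) (hU : IsOpen U)
    {z : X} (hzC : z ∈ C) (hzU : z ∉ closure U) (hCU : (C ∩ U).Nonempty) :
    ∃ w ∈ connectedComponentIn (C \ U) z, w ∈ closure U := by
  by_contra hcon
  push_neg at hcon
  have hAcl : IsClosed (C \ U) := hC.isClosed.sdiff hU
  have hAcomp : IsCompact (C \ U) := hC.diff hU
  have hzA : z ∈ C \ U := ⟨hzC, fun h => hzU (subset_closure h)⟩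
  haveI : CompactSpace ↥(C \ U) := isCompact_iff_compactSpace.mp hAcomp
  set pt : ↥(C \ U) := ⟨z, hzA⟩ with hpt
  set Wt : Set ↥(C \ U) := Subtype.val ⁻¹' closure U with hWt
  have hWtcl : IsClosed Wt := isClosed_closure.preimage continuous_subtype_val
  have hcover : Wt ⊆ ⋃ Z : {Z : Set ↥(C \ U) // IsClopen Z ∧ pt ∈ Z}, (↑Z : Set _)ᶜ := by
    intro u huW
    have hnc : u ∉ connectedComponent pt := by
      intro h
      refine hcon u.1 ?_ huW
      rw [connectedComponentIn_eq_image hzA]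
      exact ⟨u, h, rfl⟩
    rw [connectedComponent_eq_iInter_isClopen, mem_iInter] at hnc
    push_neg at hnc
    obtain ⟨Z, hZ⟩ := hnc
    exact mem_iUnion.mpr ⟨Z, hZ⟩
  obtain ⟨t, ht⟩ := (hWtcl.isCompact).elim_finite_subcover _
    (fun Z : {Z : Set ↥(C \ U) // IsClopen Z ∧ pt ∈ Z} => Z.2.1.compl.isOpen) hcover
  set P : Set ↥(C \ U) := ⋂ Z ∈ t, (Z : Set _) with hPdef
  have hPclopen : IsClopen P := isClopen_biInter_finset fun Z _ => Z.2.1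
  have hptP : pt ∈ P := mem_iInter₂.mpr fun Z _ => Z.2.2
  have hPWt : ∀ u, u ∈ P → u ∉ Wt := by
    intro u huP huW
    obtain ⟨Z, hZt, hZu⟩ := mem_iUnion₂.mp (ht huW)
    exact hZu (mem_iInter₂.mp huP Z hZt)
  obtain ⟨V, hVo, hPV⟩ := isOpen_induced_iff.mp hPclopen.isOpen
  set O : Set X := V ∩ (closure U)ᶜ with hO
  have hOo : IsOpen O := hVo.inter isClosed_closure.isOpen_compl
  set P' : Set X := Subtype.val '' P with hP'
  have hP'eq : P' = O ∩ C := by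
    ext w
    constructor
    · rintro ⟨u, huP, rfl⟩
      refine ⟨⟨?_, fun hcl => hPWt u huP hcl⟩, u.2.1⟩
      have : u ∈ Subtype.val ⁻¹' V := by rw [hPV]; exact huP
      exact this
    · rintro ⟨⟨hwV, hwU⟩, hwC⟩
      have hwA : w ∈ C \ U := ⟨hwC, fun h => hwU (subset_closure h)⟩
      refine ⟨⟨w, hwA⟩, ?_, rfl⟩
      rw [← hPV]; exact hwV
  have hP'closed : IsClosed P' :=
    ((hPclopen.isClosed.isCompact).image continuous_subtype_val).isClosed
  have hsplit := (isPreconnected_iff_subset_of_fully_disjoint_closed hC.isClosed).mp hCc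
    P' (C \ O) hP'closed (hC.isClosed.sdiff hOo)
    (by
      intro w hw
      by_cases hwO : w ∈ O
      · exact Or.inl (hP'eq ▸ ⟨hwO, hw⟩)
      · exact Or.inr ⟨hw, hwO⟩)
    (by
      rw [Set.disjoint_left]
      intro w hwP' hwD
      exact hwD.2 (hP'eq ▸ hwP' : w ∈ O ∩ C).1)
  rcases hsplit with h | h
  · obtain ⟨w, hwC, hwU⟩ := hCU
    have : w ∈ O ∩ C := hP'eq ▸ h hwC
    exact this.1.2 (subset_closure hwU)
  · have hzP' : z ∈ P' := ⟨pt, hptP, rfl⟩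
    have : z ∈ O ∩ C := hP'eq ▸ hzP'
    exact (h hzC).2 this.1

/-- One step of the Sierpiński argument. -/
lemma sier_step {C : Set X} (hC : IsCompact C) (hCc : IsPreconnected C)
    {F : ℕ → Set X} (hFcl : ∀ n, IsClosed (F n)) (hdisj : ∀ m n, m ≠ n → F m ∩ F n = ∅)
    (hcov : C ⊆ ⋃ n, F n) {a b : ℕ} (hab : a ≠ b)
    (ha : (C ∩ F a).Nonempty) (hb : (C ∩ F b).Nonempty) (i : ℕ) :
    ∃ D, IsCompact D ∧ IsPreconnected D ∧ D ⊆ C ∧ D ∩ F i = ∅ ∧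
      ∃ p q, p ≠ q ∧ (D ∩ F p).Nonempty ∧ (D ∩ F q).Nonempty := by
  by_cases hi : (C ∩ F i).Nonempty
  swap
  · exact ⟨C, hC, hCc, subset_rfl, not_nonempty_iff_eq_empty.mp hi, a, b, hab, ha, hb⟩
  obtain ⟨m, hmi, hm⟩ : ∃ m, m ≠ i ∧ (C ∩ F m).Nonempty := by
    rcases eq_or_ne a i with rfl | h
    · exact ⟨b, fun h => hab h.symm, hb⟩
    · exact ⟨a, h, ha⟩
  have hKi : IsCompact (C ∩ F i) := hC.inter_right (hFcl i)
  have hKm : IsCompact (C ∩ F m) := hC.inter_right (hFcl m)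
  have hdisj' : Disjoint (C ∩ F i) (C ∩ F m) := by
    rw [Set.disjoint_left]
    rintro w ⟨_, hwi⟩ ⟨_, hwm⟩
    have : w ∈ F i ∩ F m := ⟨hwi, hwm⟩
    rw [hdisj i m (fun h => hmi h.symm)] at this
    exact this
  obtain ⟨U, V, hUo, hVo, hiU, hmV, hUV⟩ := SeparatedNhds.of_isCompact_isCompact hKi hKm hdisj'
  have hclUV : ∀ w ∈ closure U, w ∉ C ∩ F m := by
    intro w hwcl hwm
    have hwV : w ∈ V := hmV hwm
    obtain ⟨u, hu⟩ := mem_closure_iff.1 hwcl V hVo hwV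
    exact (hUV.ne_of_mem hu.2 hu.1) rfl
  obtain ⟨z, hzC, hzFm⟩ := hm
  have hzclU : z ∉ closure U := fun h => hclUV z h ⟨hzC, hzFm⟩
  have hCU : (C ∩ U).Nonempty := hi.mono fun w hw => ⟨hw.1, hiU hw⟩
  obtain ⟨w, hwD, hwclU⟩ := bumping hC hCc hUo hzC hzclU hCU
  set D := connectedComponentIn (C \ U) z with hDdef
  have hzA : z ∈ C \ U := ⟨hzC, fun h => hzclU (subset_closure h)⟩
  have hDsub : D ⊆ C \ U := connectedComponentIn_subset _ _
  have hDpre : IsPreconnected D := isPreconnected_connectedComponentIn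
  have hDclosed : IsClosed D := by
    have hh : closure D ⊆ C \ U := (hC.isClosed.sdiff hUo).closure_subset_iff.mpr hDsub
    exact isClosed_of_closure_subset
      (hDpre.closure.subset_connectedComponentIn (subset_closure (mem_connectedComponentIn hzA)) hh)
  have hDcomp : IsCompact D := hC.of_isClosed_subset hDclosed (hDsub.trans diff_subset)
  obtain ⟨q, hq⟩ := mem_iUnion.mp (hcov (hDsub hwD).1)
  have hqm : q ≠ m := by
    rintro rfl
    exact hclUV w hwclU ⟨(hDsub hwD).1, hq⟩
  refine ⟨D, hDcomp, hDpre, hDsub.trans diff_subset, ?_, m, q, fun h => hqm h.symm,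
    ⟨z, mem_connectedComponentIn hzA, hzFm⟩, ⟨w, hwD, hq⟩⟩
  rw [eq_empty_iff_forall_notMem]
  rintro u ⟨huD, huFi⟩
  exact (hDsub huD).2 (hiU ⟨(hDsub huD).1, huFi⟩)

/-- Sierpiński-type theorem: a compact preconnected set cannot meet two members of a countable
disjoint closed cover. -/
lemma sierpinski_aux {C : Set X} (hC : IsCompact C) (hCc : IsPreconnected C)
    {F : ℕ → Set X} (hFcl : ∀ n, IsClosed (F n)) (hdisj : ∀ m n, m ≠ n → F m ∩ F n = ∅)
    (hcov : C ⊆ ⋃ n, F n) {a b : ℕ} (hab : a ≠ b)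
    (ha : (C ∩ F a).Nonempty) (hb : (C ∩ F b).Nonempty) : False := by
  set P : Set X → Prop := fun D => IsCompact D ∧ IsPreconnected D ∧ D ⊆ C ∧
      ∃ p q, p ≠ q ∧ (D ∩ F p).Nonempty ∧ (D ∩ F q).Nonempty with hPdef
  have h0 : P C := ⟨hC, hCc, subset_rfl, a, b, hab, ha, hb⟩
  have step : ∀ n D, P D → ∃ D', P D' ∧ (D' ⊆ D ∧ D' ∩ F n = ∅) := by
    intro n D hD
    obtain ⟨p, q, hpq, hp, hq⟩ := hD.2.2.2
    obtain ⟨D', c1, c2, c3, c4, c5⟩ := sier_step hD.1 hD.2.1 hFcl hdisj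
      (hD.2.2.1.trans hcov) hpq hp hq n
    exact ⟨D', ⟨c1, c2, c3.trans hD.2.2.1, c5⟩, c3, c4⟩
  obtain ⟨seq, hseq0, hseqP, hseqR⟩ := exists_seq_of_step C h0 step
  have hnex : ∀ n, (seq n).Nonempty := by
    intro n
    obtain ⟨p, q, hpq, hp, hq⟩ := (hseqP n).2.2.2
    exact hp.mono inter_subset_left
  obtain ⟨ξ, hξ⟩ := IsCompact.nonempty_iInter_of_sequence_nonempty_isCompact_isClosed
    seq (fun n => (hseqR n).1) hnex (hseqP 0).1 (fun n => (hseqP n).1.isClosed)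
  have hξC : ξ ∈ C := by
    have := mem_iInter.mp hξ 0
    rwa [hseq0] at this
  obtain ⟨n, hn⟩ := mem_iUnion.mp (hcov hξC)
  have hmem : ξ ∈ seq (n + 1) ∩ F n := ⟨mem_iInter.mp hξ (n + 1), hn⟩
  rw [(hseqR n).2] at hmem
  exact hmem

end Topology

/-- If a countable group `Γ` acts by homeomorphisms on a nonempty connected, locally
connected, locally compact Hausdorff space `X` with all fixed sets of nontrivial elements
small, then every topological orbit equivalence `f : X' → X` from an action of a group
`Γ'` by homeomorphisms on a space `X'` is equivariant: each `γ' ∈ Γ'` acts through `f` as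
a single element `γ ∈ Γ`. -/
theorem stmt4 (X : Type*) [TopologicalSpace X] [Nonempty X] [ConnectedSpace X]
    [LocallyConnectedSpace X] [LocallyCompactSpace X] [T2Space X]
    (Γ : Type*) [Group Γ] [Countable Γ] [MulAction Γ X]
    (hcont : ∀ γ : Γ, Continuous fun x : X => γ • x)
    (hfix : ∀ γ : Γ, γ ≠ 1 → SmallSet {x : X | γ • x = x})
    (X' : Type*) [TopologicalSpace X']
    (Γ' : Type*) [Group Γ'] [MulAction Γ' X']
    (hcont' : ∀ γ' : Γ', Continuous fun y : X' => γ' • y)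
    (f : X' ≃ₜ X)
    (horb : ∀ y : X', f '' MulAction.orbit Γ' y = MulAction.orbit Γ (f y)) :
    ∀ γ' : Γ', ∃ γ : Γ, ∀ y : X', f (γ' • y) = γ • f y := by
  classical
  intro γ'
  set g : X → X := fun x => f (γ' • f.symm x) with hg
  have hgcont : Continuous g := f.continuous.comp ((hcont' γ').comp f.symm.continuous)
  have hglabel : ∀ x : X, ∃ γ : Γ, γ • x = g x := by
    intro x
    have h1 : g x ∈ f '' MulAction.orbit Γ' (f.symm x) :=
      ⟨γ' • f.symm x, MulAction.mem_orbit _ γ', rfl⟩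
    rw [horb, f.apply_symm_apply] at h1
    exact MulAction.mem_orbit_iff.mp h1
  set E : Γ → Set X := fun γ => {x | g x = γ • x} with hE
  have hEcl : ∀ γ, IsClosed (E γ) := fun γ => isClosed_eq hgcont (hcont γ)
  set Afix : Set X := ⋃ η : {η : Γ // η ≠ 1}, {x : X | (η : Γ) • x = x} with hAfix
  have hEE : ∀ (γ δ : Γ), γ ≠ δ → E γ ∩ E δ ⊆ Afix := by
    rintro γ δ hne x ⟨h1, h2⟩
    have hgd : γ • x = δ • x := by
      rw [← h1, ← h2]
    have hx : (δ⁻¹ * γ) • x = x := by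
      rw [mul_smul, hgd, inv_smul_smul]
    refine Set.mem_iUnion.mpr ⟨⟨δ⁻¹ * γ, fun h => ?_⟩, hx⟩
    exact hne.symm (inv_mul_eq_one.mp h)
  have hAdense : Dense Afixᶜ := by
    rw [hAfix, Set.compl_iUnion]
    exact dense_iInter_of_isOpen (fun η => (hfix η.1 η.2).1.isOpen_compl)
      (fun η => interior_eq_empty_iff_dense_compl.mp (hfix η.1 η.2).2.1)
  obtain ⟨x₀, hx₀⟩ := hAdense.nonempty
  obtain ⟨γ₀, hγ₀⟩ := hglabel x₀
  by_cases hall : ∀ x : X, g x = γ₀ • x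
  · refine ⟨γ₀, fun y => ?_⟩
    have := hall (f y)
    simpa [hg, f.symm_apply_apply] using this
  · exfalso
    push_neg at hall
    obtain ⟨x₁, hx₁⟩ := hall
    obtain ⟨y₀, hy₀c, hy₀A⟩ : ∃ y₀, y₀ ∈ (E γ₀)ᶜ ∧ y₀ ∈ Afixᶜ := by
      obtain ⟨w, hw1, hw2⟩ := hAdense.inter_open_nonempty _ (hEcl γ₀).isOpen_compl ⟨x₁, hx₁⟩
      exact ⟨w, hw1, hw2⟩
    obtain ⟨δ₀, hδ₀⟩ := hglabel y₀
    have hδγ : δ₀ ≠ γ₀ := by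
      rintro rfl
      exact hy₀c hδ₀.symm
    -- index the small sets by ℕ
    obtain ⟨e, he⟩ := Countable.exists_injective_nat {η : Γ // η ≠ 1}
    set B : ℕ → Set X := fun n =>
      if h : ∃ η : {η : Γ // η ≠ 1}, e η = n then {x : X | (h.choose : Γ) • x = x} else ∅
      with hB
    have hBsmall : ∀ n, SmallSet (B n) := by
      intro n
      rw [hB]
      dsimp only
      split_ifs with h
      · exact hfix h.choose.1 h.choose.2
      · exact smallSet_empty
    have hBA : ∀ w, w ∉ Afix → ∀ n, w ∉ B n := by
      intro w hw n
      rw [hB]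
      dsimp only
      split_ifs with h
      · intro hmem
        exact hw (Set.mem_iUnion.mpr ⟨h.choose, hmem⟩)
      · exact Set.notMem_empty w
    have hAB : Afix ⊆ ⋃ n, B n := by
      intro w hw
      obtain ⟨η, hη⟩ := Set.mem_iUnion.mp hw
      refine Set.mem_iUnion.mpr ⟨e η, ?_⟩
      rw [hB]
      dsimp only
      have hex : ∃ η' : {η : Γ // η ≠ 1}, e η' = e η := ⟨η, rfl⟩
      rw [dif_pos hex]
      have heq : hex.choose = η := he hex.choose_spec
      rw [heq]
      exact hη
    obtain ⟨C, hCcomp, hCpre, _hCW, hxC, hyC, hCB⟩ := exists_continuum_avoiding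
      isOpen_univ isPreconnected_univ hBsmall (Set.mem_univ x₀) (Set.mem_univ y₀)
      (hBA x₀ hx₀) (hBA y₀ hy₀A)
    have hCA : ∀ w ∈ C, w ∉ Afix := by
      intro w hwC hwA
      obtain ⟨n, hn⟩ := Set.mem_iUnion.mp (hAB hwA)
      have : w ∈ C ∩ B n := ⟨hwC, hn⟩
      rw [hCB n] at this
      exact this
    -- index the cover by ℕ
    obtain ⟨e2, he2⟩ := Countable.exists_injective_nat Γ
    set G : ℕ → Set X := fun n => if h : ∃ γ : Γ, e2 γ = n then E h.choose ∩ C else ∅ with hG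
    have hGcl : ∀ n, IsClosed (G n) := by
      intro n
      rw [hG]
      dsimp only
      split_ifs with h
      · exact (hEcl _).inter hCcomp.isClosed
      · exact isClosed_empty
    have hGmem : ∀ γ : Γ, E γ ∩ C ⊆ G (e2 γ) := by
      intro γ
      have hex : ∃ γ'' : Γ, e2 γ'' = e2 γ := ⟨γ, rfl⟩
      rw [hG]
      dsimp only
      rw [dif_pos hex, he2 hex.choose_spec]
    have hGsub : ∀ n w, w ∈ G n → ∃ γ, e2 γ = n ∧ w ∈ E γ ∩ C := by
      intro n w hw
      rw [hG] at hw
      dsimp only at hw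
      split_ifs at hw with h
      · exact ⟨h.choose, h.choose_spec, hw⟩
      · exact absurd hw (Set.notMem_empty w)
    have hGdisj : ∀ m n, m ≠ n → G m ∩ G n = ∅ := by
      intro m n hmn
      rw [Set.eq_empty_iff_forall_notMem]
      rintro w ⟨hwm, hwn⟩
      obtain ⟨γm, hγm, hwEm, hwCm⟩ := hGsub m w hwm
      obtain ⟨γn, hγn, hwEn, _⟩ := hGsub n w hwn
      have hγmn : γm ≠ γn := by
        rintro rfl
        exact hmn (hγm ▸ hγn ▸ rfl)
      exact hCA w hwCm (hEE γm γn hγmn ⟨hwEm, hwEn⟩)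
    have hGcov : C ⊆ ⋃ n, G n := by
      intro w hw
      obtain ⟨γ, hγ⟩ := hglabel w
      exact Set.mem_iUnion.mpr ⟨e2 γ, hGmem γ ⟨hγ.symm, hw⟩⟩
    have hne2 : e2 γ₀ ≠ e2 δ₀ := fun h => hδγ (he2 h).symm
    exact sierpinski_aux hCcomp hCpre hGcl hGdisj hGcov hne2
      ⟨x₀, hxC, hGmem γ₀ ⟨hγ₀.symm, hxC⟩⟩ ⟨y₀, hyC, hGmem δ₀ ⟨hδ₀.symm, hyC⟩⟩
end

section
/- Let n ≥ 2 and let Γ be a subgroup of SL_n(ℤ) all of whose non-identity elements are hyperbolic, i.e., no complex eigenvalue of any γ ≠ 1 in Γ has absolute value 1. Then for every homeomorphism f of the torus T^n = ℝⁿ/ℤⁿ satisfying f(x) ∈ Γ·x for all x ∈ T^n, there exists γ ∈ Γ such that f(x) = γ·x for all x ∈ T^n. -/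
/-!
Lift everything to `ℝⁿ`. For `γ ≠ γ'` in `Γ` the element `γ⁻¹γ'` has no eigenvalue `1`, so
`γ - γ'` is invertible over `ℝ` and the lifted coincidence set `{v | γv ≡ γ'v mod ℤⁿ}` is the
preimage of `ℤⁿ` under it, hence countable. As `n ≥ 2`, the complement `U` of the union of all
these sets is path connected and dense. Along a path in `U` the sets of times at which `f` agrees
with a given `γ` are closed, pairwise disjoint and cover `[0, 1]`, so by Sierpiński's theorem only
one of them is nonempty. Hence `f` agrees with a single `γ₀` on `U`, and everywhere by continuity.
-/

/-- The action induced on the torus `Tⁿ = ℝⁿ/ℤⁿ = (ℝ/ℤ)ⁿ` by an integer matrix `γ`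
(the map induced by the linear map `x ↦ γx` of `ℝⁿ`). -/
noncomputable def torusAct {n : ℕ} (γ : Matrix (Fin n) (Fin n) ℤ) (x : Fin n → AddCircle (1 : ℝ)) :
    Fin n → AddCircle (1 : ℝ) :=
  fun j => ∑ i, γ j i • x i

open Set Function Matrix

instance {m R : Type*} [Fintype m] [DecidableEq m] [CommRing R] [Countable R] :
    Countable (SpecialLinearGroup m R) :=
  @Subtype.countable _ (inferInstanceAs (Countable (m → m → R))) _

section Sierpinski

variable {ι : Type*} {F : ι → Set ℝ}

lemma exists_Icc_subset_disjoint_of_mem_of_mem (hcl : ∀ i, IsClosed (F i))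
    (hdisj : Pairwise (Disjoint on F)) {p q : ℝ} (hcov : Icc p q ⊆ ⋃ i, F i)
    {a b : ι} (hab : a ≠ b) (hp : p ∈ F a) (hq : q ∈ F b) (hpq : p ≤ q) (m : ι) :
    ∃ p' q', p' < q' ∧ Icc p' q' ⊆ Icc p q ∧ Disjoint (Icc p' q') (F m) ∧
      ∃ a' b', a' ≠ b' ∧ p' ∈ F a' ∧ q' ∈ F b' := by
  have hmem : ∀ t ∈ Icc p q, ∃ i, t ∈ F i := fun t ht => mem_iUnion.mp (hcov ht)
  obtain ⟨c, ⟨hca, hcI⟩, hcmax⟩ := (isCompact_Icc.inter_left (hcl a)).exists_isGreatest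
    ⟨p, hp, le_rfl, hpq⟩
  have hcq : c < q := hcI.2.lt_of_ne ((hdisj hab).ne_of_mem hca hq)
  have hafter : ∀ t, c < t → t ≤ q → t ∉ F a := fun t hct htq hta =>
    (hcmax ⟨hta, hcI.1.trans hct.le, htq⟩).not_gt hct
  by_cases hma : m = a
  · -- `(c, d)` is a gap between `F a` and `F b`; its right half avoids `F a`.
    subst hma
    obtain ⟨d, ⟨hdb, hdI⟩, hdmin⟩ := (isCompact_Icc.inter_left (hcl b)).exists_isLeast
      ⟨q, hq, hcq.le, le_rfl⟩
    have hcd : c < d := hdI.1.lt_of_ne ((hdisj hab).ne_of_mem hca hdb)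
    obtain ⟨i, hi⟩ := hmem ((c + d) / 2) ⟨by linarith [hcI.1], by linarith [hdI.2]⟩
    have hib : i ≠ b := by
      rintro rfl
      linarith [hdmin ⟨hi, by linarith, by linarith [hdI.2]⟩]
    refine ⟨(c + d) / 2, d, by linarith, Icc_subset_Icc (by linarith [hcI.1]) hdI.2, ?_,
      i, b, hib, hi, hdb⟩
    exact disjoint_left.mpr fun t ht => hafter t (by linarith [ht.1]) (ht.2.trans hdI.2)
  · -- Stop halfway between `c` and the first point of `F m ∪ F b` to its right.
    obtain ⟨e, ⟨hemb, heI⟩, hemin⟩ :=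
      (isCompact_Icc.inter_left ((hcl m).union (hcl b))).exists_isLeast
        ⟨q, Or.inr hq, hcq.le, le_rfl⟩
    have hce : c < e := heI.1.lt_of_ne fun hce => by
      rcases hemb with he | he
      · exact (hdisj (Ne.symm hma)).ne_of_mem hca he hce
      · exact (hdisj hab).ne_of_mem hca he hce
    obtain ⟨i, hi⟩ := hmem ((c + e) / 2) ⟨by linarith [hcI.1], by linarith [heI.2]⟩
    have hai : a ≠ i := by
      rintro rfl
      exact hafter _ (by linarith) (by linarith [heI.2]) hi
    refine ⟨c, (c + e) / 2, by linarith, Icc_subset_Icc hcI.1 (by linarith [heI.2]), ?_,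
      a, i, hai, hca, hi⟩
    refine disjoint_left.mpr fun t ht htm => ?_
    rcases ht.1.eq_or_lt with rfl | hct
    · exact (hdisj (Ne.symm hma)).ne_of_mem hca htm rfl
    · linarith [hemin ⟨Or.inl htm, hct.le, by linarith [ht.2, heI.2]⟩, ht.2]

/-- Sierpiński's theorem for a compact interval. -/
lemma eq_of_mem_of_Icc_subset_iUnion [Countable ι] (hcl : ∀ i, IsClosed (F i))
    (hdisj : Pairwise (Disjoint on F)) {p q : ℝ} (hcov : Icc p q ⊆ ⋃ i, F i)
    {a b : ι} (hp : p ∈ F a) (hq : q ∈ F b) (hpq : p ≤ q) : a = b := by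
  by_contra hab
  have : Nonempty ι := ⟨a⟩
  obtain ⟨e, he⟩ := exists_surjective_nat ι
  -- Nested intervals, the `k`-th one avoiding `F (e k)`; a point in all of them lies in no `F i`.
  let Good : ℝ × ℝ → Prop := fun J => J.1 ≤ J.2 ∧ Icc J.1 J.2 ⊆ Icc p q ∧
    ∃ a b, a ≠ b ∧ J.1 ∈ F a ∧ J.2 ∈ F b
  have hstep : ∀ J, Good J → ∀ m, ∃ J', Good J' ∧ Icc J'.1 J'.2 ⊆ Icc J.1 J.2 ∧
      Disjoint (Icc J'.1 J'.2) (F m) := by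
    rintro ⟨u, v⟩ ⟨huv, hsub, a, b, hab, hu, hv⟩ m
    obtain ⟨u', v', huv', hsub', hdisj', a', b', hab', hu', hv'⟩ :=
      exists_Icc_subset_disjoint_of_mem_of_mem hcl hdisj (hsub.trans hcov) hab hu hv huv m
    exact ⟨(u', v'), ⟨huv'.le, hsub'.trans hsub, a', b', hab', hu', hv'⟩, hsub', hdisj'⟩
  choose! next hgood hsub havoid using hstep
  let J : ℕ → ℝ × ℝ := fun k => Nat.rec (p, q) (fun k J => next J (e k)) k
  have hJ : ∀ k, Good (J k) := fun k => by
    induction k with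
    | zero => exact ⟨hpq, subset_rfl, a, b, hab, hp, hq⟩
    | succ k ih => exact hgood _ ih _
  obtain ⟨x, hx⟩ := IsCompact.nonempty_iInter_of_sequence_nonempty_isCompact_isClosed
    (fun k => Icc (J k).1 (J k).2) (fun k => hsub _ (hJ k) _)
    (fun k => nonempty_Icc.mpr (hJ k).1) isCompact_Icc (fun _ => isClosed_Icc)
  rw [mem_iInter] at hx
  obtain ⟨i, hi⟩ := mem_iUnion.mp (hcov (hx 0))
  obtain ⟨k, rfl⟩ := he i
  exact disjoint_left.mp (havoid _ (hJ k) _) (hx (k + 1)) hi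

end Sierpinski

lemma IsPathConnected.eq_of_mem_of_subset_iUnion {X ι : Type*} [TopologicalSpace X]
    [Countable ι] {F : ι → Set X} {S : Set X} (hS : IsPathConnected S)
    (hcl : ∀ i, IsClosed (F i)) (hdisj : Pairwise fun i j => Disjoint (S ∩ F i) (S ∩ F j))
    (hcov : S ⊆ ⋃ i, F i) {x y : X} (hx : x ∈ S) (hy : y ∈ S) {a b : ι}
    (ha : x ∈ F a) (hb : y ∈ F b) : a = b := by
  let γ := (hS.joinedIn x hx y hy).somePath
  have hγS : ∀ t, γ.extend t ∈ S := fun t =>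
    (hS.joinedIn x hx y hy).somePath_mem (projIcc 0 1 zero_le_one t)
  refine eq_of_mem_of_Icc_subset_iUnion (F := fun i => Icc 0 1 ∩ γ.extend ⁻¹' F i)
    (fun i => isClosed_Icc.inter ((hcl i).preimage γ.continuous_extend))
    (fun i j hij => disjoint_left.mpr fun t hti htj =>
      (hdisj hij).ne_of_mem ⟨hγS t, hti.2⟩ ⟨hγS t, htj.2⟩ rfl)
    (fun t ht => ?_) ⟨left_mem_Icc.mpr zero_le_one, by simpa using ha⟩
    ⟨right_mem_Icc.mpr zero_le_one, by simpa using hb⟩ zero_le_one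
  obtain ⟨i, hi⟩ := mem_iUnion.mp (hcov (hγS t))
  exact mem_iUnion.mpr ⟨i, ht, hi⟩

lemma exists_eq_of_forall_exists_eq_of_countable_coincidences {E X ι : Type*}
    [NormedAddCommGroup E] [NormedSpace ℝ E] [TopologicalSpace X] [T2Space X] [Countable ι]
    (hE : 1 < Module.rank ℝ E) {g : E → X} {h : ι → E → X} (hg : Continuous g)
    (hh : ∀ i, Continuous (h i)) (hgh : ∀ v, ∃ i, g v = h i v)
    (hD : {v | ∃ i j, i ≠ j ∧ h i v = h j v}.Countable) : ∃ i, g = h i := by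
  set D := {v | ∃ i j, i ≠ j ∧ h i v = h j v}
  have : Nontrivial E := rank_pos_iff_nontrivial.mp (zero_lt_one.trans hE)
  have hU := hD.isPathConnected_compl_of_one_lt_rank hE
  let F : ι → Set E := fun i => {v | g v = h i v}
  have hcov : Dᶜ ⊆ ⋃ i, F i := fun v _ => mem_iUnion.mpr (hgh v)
  have hdisj : Pairwise fun i j => Disjoint (Dᶜ ∩ F i) (Dᶜ ∩ F j) :=
    fun i j hij => disjoint_left.mpr fun v ⟨hvD, hvi⟩ ⟨_, hvj⟩ =>
      hvD ⟨i, j, hij, hvi.symm.trans hvj⟩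
  obtain ⟨v₀, hv₀⟩ := hU.nonempty
  obtain ⟨i₀, hi₀⟩ := mem_iUnion.mp (hcov hv₀)
  refine ⟨i₀, Continuous.ext_on (hD.dense_compl ℝ) hg (hh i₀) fun v hv => ?_⟩
  obtain ⟨i, hi⟩ := mem_iUnion.mp (hcov hv)
  rwa [hU.eq_of_mem_of_subset_iUnion (fun i => isClosed_eq hg (hh i)) hdisj hcov hv hv₀
    hi hi₀] at hi

lemma det_sub_ne_zero_of_not_isRoot_one {n : ℕ} {γ γ' : SpecialLinearGroup (Fin n) ℤ}
    (h : ¬ (((γ⁻¹ * γ' : SpecialLinearGroup (Fin n) ℤ) : Matrix (Fin n) (Fin n) ℤ).map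
      (Int.cast : ℤ → ℂ)).charpoly.IsRoot 1) :
    ((γ : Matrix (Fin n) (Fin n) ℤ) - γ').det ≠ 0 := by
  set δ : Matrix (Fin n) (Fin n) ℤ := ↑(γ⁻¹ * γ')
  have hfactor : (γ : Matrix (Fin n) (Fin n) ℤ) - γ' = γ * (1 - δ) := by
    rw [Matrix.mul_sub, mul_one, ← Matrix.SpecialLinearGroup.coe_mul, mul_inv_cancel_left]
  intro h0
  apply h
  rw [hfactor, det_mul, Matrix.SpecialLinearGroup.det_coe, one_mul] at h0
  rw [Polynomial.IsRoot, eval_charpoly, scalar_apply, diagonal_one,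
    ← Matrix.map_one _ Int.cast_zero Int.cast_one, ← Matrix.map_sub _ Int.cast_sub,
    ← Int.cast_det, h0, Int.cast_zero]

section Torus

variable {n : ℕ}

noncomputable def torusProj (v : Fin n → ℝ) : Fin n → AddCircle (1 : ℝ) :=
  fun i => (v i : AddCircle (1 : ℝ))

lemma continuous_torusProj : Continuous (torusProj (n := n)) :=
  continuous_pi fun i => (AddCircle.continuous_mk' 1).comp (continuous_apply i)

lemma torusProj_surjective : Surjective (torusProj (n := n)) := fun x =>
  ⟨fun i => (QuotientAddGroup.mk_surjective (x i)).choose,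
    funext fun i => (QuotientAddGroup.mk_surjective (x i)).choose_spec⟩

lemma countable_setOf_torusProj_eq_zero : {w : Fin n → ℝ | torusProj w = 0}.Countable := by
  refine (countable_range fun z : Fin n → ℤ => fun i => (z i : ℝ)).mono fun w hw => ?_
  have : ∀ i, ∃ m : ℤ, (m : ℝ) = w i := fun i => by
    simpa using (AddCircle.coe_eq_zero_iff 1).mp (congrFun hw i)
  choose z hz using this
  exact ⟨z, funext hz⟩

lemma continuous_torusAct (A : Matrix (Fin n) (Fin n) ℤ) : Continuous (torusAct A) :=
  continuous_pi fun j => continuous_finsetSum _ fun i _ => (continuous_apply i).zsmul (A j i)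

lemma torusAct_sub (A B : Matrix (Fin n) (Fin n) ℤ) (x : Fin n → AddCircle (1 : ℝ)) :
    torusAct (A - B) x = torusAct A x - torusAct B x := by
  funext j
  simp [torusAct, sub_smul, Finset.sum_sub_distrib]

lemma torusAct_torusProj (A : Matrix (Fin n) (Fin n) ℤ) (v : Fin n → ℝ) :
    torusAct A (torusProj v) = torusProj (A.map (Int.cast : ℤ → ℝ) *ᵥ v) := by
  funext j
  simp only [torusAct, torusProj, mulVec, dotProduct, map_apply, ← zsmul_eq_mul,
    ← AddCircle.coe_zsmul]
  exact (map_sum (QuotientAddGroup.mk' (AddSubgroup.zmultiples (1 : ℝ))) _ _).symm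

lemma countable_setOf_torusAct_torusProj_eq {A B : Matrix (Fin n) (Fin n) ℤ}
    (h : (A - B).det ≠ 0) :
    {v : Fin n → ℝ | torusAct A (torusProj v) = torusAct B (torusProj v)}.Countable := by
  have hinj : Injective ((A - B).map (Int.cast : ℤ → ℝ)).mulVec := by
    refine mulVec_injective_of_isUnit ?_
    rw [isUnit_iff_isUnit_det, ← Int.cast_det, isUnit_iff_ne_zero]
    exact_mod_cast h
  refine (countable_setOf_torusProj_eq_zero.preimage hinj).mono fun v hv => ?_
  rw [mem_preimage, mem_ofPred_eq, ← torusAct_torusProj, torusAct_sub, sub_eq_zero]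
  exact hv

lemma countable_setOf_exists_ne_torusAct_torusProj_eq
    {Γ : Subgroup (SpecialLinearGroup (Fin n) ℤ)}
    (hΓ : ∀ γ ∈ Γ, γ ≠ 1 →
      ¬ ((γ : Matrix (Fin n) (Fin n) ℤ).map (Int.cast : ℤ → ℂ)).charpoly.IsRoot 1) :
    {v : Fin n → ℝ | ∃ γ γ' : Γ, γ ≠ γ' ∧ torusAct (γ : Matrix (Fin n) (Fin n) ℤ)
      (torusProj v) = torusAct (γ' : Matrix (Fin n) (Fin n) ℤ) (torusProj v)}.Countable := by
  refine (countable_iUnion fun γ : Γ => countable_iUnion fun γ' : Γ =>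
    countable_iUnion fun hne : γ ≠ γ' => countable_setOf_torusAct_torusProj_eq <|
      det_sub_ne_zero_of_not_isRoot_one <| hΓ _ (mul_mem (inv_mem γ.2) γ'.2)
        fun h => hne (Subtype.ext (inv_mul_eq_one.mp h))).mono ?_
  rintro v ⟨γ, γ', hne, hv⟩
  exact mem_iUnion₂.mpr ⟨γ, γ', mem_iUnion.mpr ⟨hne, hv⟩⟩

end Torus

/-- **Hyperbolic subgroups have rigid orbit structure on the torus.** Let `Γ ≤ SL_n(ℤ)`,
`n ≥ 2`, consist (apart from the identity) only of hyperbolic elements, i.e. no complex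
eigenvalue of any `γ ≠ 1` in `Γ` has absolute value `1`. Then every inner orbit
equivalence of the `Γ`-action on `Tⁿ` is given by a single element of `Γ`. -/
theorem stmt6 (n : ℕ) (hn : 2 ≤ n)
    (Γ : Subgroup (Matrix.SpecialLinearGroup (Fin n) ℤ))
    (hhyp : ∀ γ ∈ Γ, γ ≠ 1 → ∀ z : ℂ,
      (((γ : Matrix (Fin n) (Fin n) ℤ)).map (Int.cast : ℤ → ℂ)).charpoly.IsRoot z →
        ‖z‖ ≠ 1)
    (f : (Fin n → AddCircle (1 : ℝ)) ≃ₜ (Fin n → AddCircle (1 : ℝ)))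
    (hf : ∀ x : Fin n → AddCircle (1 : ℝ),
      ∃ γ ∈ Γ, f x = torusAct (γ : Matrix (Fin n) (Fin n) ℤ) x) :
    ∃ γ ∈ Γ, ∀ x : Fin n → AddCircle (1 : ℝ),
      f x = torusAct (γ : Matrix (Fin n) (Fin n) ℤ) x := by
  obtain ⟨γ, hγ⟩ := exists_eq_of_forall_exists_eq_of_countable_coincidences
    (g := f ∘ torusProj) (h := fun γ : Γ => torusAct (γ : Matrix (Fin n) (Fin n) ℤ) ∘ torusProj)
    (by rw [rank_fin_fun]; exact_mod_cast hn) (f.continuous.comp continuous_torusProj)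
    (fun _ => (continuous_torusAct _).comp continuous_torusProj)
    (fun v => let ⟨γ, hγ, hv⟩ := hf (torusProj v); ⟨⟨γ, hγ⟩, hv⟩)
    (countable_setOf_exists_ne_torusAct_torusProj_eq fun γ hγ hne hroot =>
      hhyp γ hγ hne 1 hroot norm_one)
  refine ⟨γ, γ.2, fun x => ?_⟩
  obtain ⟨v, rfl⟩ := torusProj_surjective x
  exact congrFun hγ v
end

section
/- Let n ≥ 2 and let Γ be a countable subgroup of GL_n(ℂ), acting on the complex projective space ℂP^{n-1} (the projectivization of ℂⁿ) by the projective transformations induced by the linear action on ℂⁿ. Then for every homeomorphism f of ℂP^{n-1} satisfying f(p) ∈ Γ·p for all p ∈ ℂP^{n-1}, there exists γ ∈ Γ such that f(p) = γ·p for all p ∈ ℂP^{n-1}. -/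
open scoped LinearAlgebra.Projectivization

/-- The quotient topology on a projective space: `ℙ K V` is the quotient of `V \ {0}`
(with the subspace topology) by the proportionality relation. -/
noncomputable instance projectivizationTopology (K V : Type*) [DivisionRing K]
    [AddCommGroup V] [Module K V] [TopologicalSpace V] :
    TopologicalSpace (Projectivization K V) :=
  inferInstanceAs (TopologicalSpace (Quotient (projectivizationSetoid K V)))

/-- An invertible matrix `γ ∈ GL_n(ℂ)` acts on `ℂP^{n-1}`, sending the line through
`v ≠ 0` to the line through `γv`. -/
noncomputable def projAct {n : ℕ} (γ : Matrix.GeneralLinearGroup (Fin n) ℂ)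
    (p : ℙ ℂ (Fin n → ℂ)) : ℙ ℂ (Fin n → ℂ) :=
  Projectivization.map ((γ : Matrix (Fin n) (Fin n) ℂ).mulVecLin)
    (Function.LeftInverse.injective (g := ((γ⁻¹ : Matrix.GeneralLinearGroup (Fin n) ℂ) :
        Matrix (Fin n) (Fin n) ℂ).mulVecLin) (fun v => by
      have h : ((γ⁻¹ : Matrix.GeneralLinearGroup (Fin n) ℂ) : Matrix (Fin n) (Fin n) ℂ) *
          (γ : Matrix (Fin n) (Fin n) ℂ) = 1 := Units.inv_mul γ
      simp only [Matrix.mulVecLin_apply, Matrix.mulVec_mulVec, h, Matrix.one_mulVec])) p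


/-!
The sets `E γ = {p | f p = γ • p}`, `γ ∈ Γ`, are closed and cover `ℂP^{n-1}`, so by Baire's
theorem the union of their interiors is dense; it suffices to show that any two `γ, γ'` for which
`E γ` and `E γ'` have interior act in the same way.

Call `p` ambiguous if two elements of `Γ` acting differently agree at `p`. Two different
projective transformations agree only on a nowhere dense set, and on a projective line through a
point where they differ, only at finitely many points (the condition is the vanishing of
quadratic polynomials in the parameter). Hence the ambiguous points form a meagre set, and on a
line through a non-ambiguous point the ambiguous parameters form a countable subset of `ℂ`, whose
complement is path-connected. This gives a path from `int E γ` to `int E γ'` avoiding the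
ambiguous points. Along it, the times at which `f` agrees with a given element of `Γ` form a
countable partition of `ℝ` into closed sets, which is trivial by Sierpiński's theorem.
-/

open Projectivization Set Topology Matrix

namespace Projectivization

section Topology

variable {K V : Type*} [DivisionRing K] [AddCommGroup V] [Module K V] [TopologicalSpace V]

theorem isQuotientMap_mk' : IsQuotientMap (mk' K : {v : V // v ≠ 0} → ℙ K V) :=
  isQuotientMap_quot_mk

theorem _root_.Continuous.projectivization_mk {X : Type*} [TopologicalSpace X] {g : X → V}
    (hg : Continuous g) (hg₀ : ∀ x, g x ≠ 0) : Continuous fun x => mk K (g x) (hg₀ x) :=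
  isQuotientMap_mk'.continuous.comp (hg.subtype_mk hg₀)

theorem continuous_map {L W : Type*} [DivisionRing L] [AddCommGroup W] [Module L W]
    [TopologicalSpace W] {σ : K →+* L} (f : V →ₛₗ[σ] W) (hf : Function.Injective f)
    (hc : Continuous f) : Continuous (map f hf) := by
  rw [isQuotientMap_mk'.continuous_iff]
  exact (hc.comp continuous_subtype_val).projectivization_mk _

end Topology

section RCLike

open scoped ComplexOrder

variable {𝕜 ι : Type*} [RCLike 𝕜] [Fintype ι]

noncomputable def projectionMatrix : ℙ 𝕜 (ι → 𝕜) → Matrix ι ι 𝕜 :=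
  Projectivization.lift (fun v => (star v.1 ⬝ᵥ v.1)⁻¹ • vecMulVec v.1 (star v.1)) <| by
    rintro ⟨a, ha⟩ ⟨b, hb⟩ t rfl
    have ht : t ≠ 0 := by rintro rfl; simp at ha
    have ht' : star t ≠ 0 := star_ne_zero.mpr ht
    rw [star_smul, smul_vecMulVec, vecMulVec_smul, smul_dotProduct, dotProduct_smul, smul_smul,
      smul_smul]
    congr 1
    simp only [smul_eq_mul]
    field_simp

theorem projectionMatrix_mk (v : ι → 𝕜) (hv : v ≠ 0) :
    projectionMatrix (mk 𝕜 v hv) = (star v ⬝ᵥ v)⁻¹ • vecMulVec v (star v) :=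
  rfl

theorem projectionMatrix_mk_mulVec (v w : ι → 𝕜) (hv : v ≠ 0) :
    projectionMatrix (mk 𝕜 v hv) *ᵥ w = ((star v ⬝ᵥ v)⁻¹ * (star v ⬝ᵥ w)) • v := by
  rw [projectionMatrix_mk, smul_mulVec, vecMulVec_mulVec, op_smul_eq_smul, smul_smul]

theorem projectionMatrix_injective :
    Function.Injective (projectionMatrix : ℙ 𝕜 (ι → 𝕜) → Matrix ι ι 𝕜) := by
  intro p q h
  induction p using Projectivization.ind with | h v hv =>
  induction q using Projectivization.ind with | h w hw =>
  have hw' : star w ⬝ᵥ w ≠ 0 := dotProduct_star_self_eq_zero.not.mpr hw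
  have key := congrArg (· *ᵥ w) h
  simp only [projectionMatrix_mk_mulVec, inv_mul_cancel₀ hw', one_smul] at key
  exact ((mk_eq_mk_iff' 𝕜 w v hw hv).mpr ⟨_, key⟩).symm

theorem continuous_projectionMatrix :
    Continuous (projectionMatrix : ℙ 𝕜 (ι → 𝕜) → Matrix ι ι 𝕜) := by
  rw [isQuotientMap_mk'.continuous_iff]
  have hv : Continuous fun v : {v : ι → 𝕜 // v ≠ 0} => v.1 := continuous_subtype_val
  refine Continuous.smul (M := 𝕜) ?_ (hv.matrix_vecMulVec hv.star)
  exact ((hv.star).dotProduct hv).inv₀ fun v => dotProduct_star_self_eq_zero.not.mpr v.2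

instance : T2Space (ℙ 𝕜 (ι → 𝕜)) :=
  .of_injective_continuous projectionMatrix_injective continuous_projectionMatrix

instance : CompactSpace (ℙ 𝕜 (ι → 𝕜)) := by
  have hS : ∀ v : Metric.sphere (0 : ι → 𝕜) 1, (v : ι → 𝕜) ≠ 0 := fun v h => by
    simpa [h] using v.2
  have := isCompact_iff_compactSpace.mp (isCompact_sphere (0 : ι → 𝕜) 1)
  refine Function.Surjective.compactSpace (continuous_subtype_val.projectivization_mk hS) ?_
  intro p
  induction p using Projectivization.ind with | h v hv =>
  refine ⟨⟨(‖v‖⁻¹ : 𝕜) • v, by simpa using norm_smul_inv_norm hv⟩, ?_⟩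
  exact (mk_eq_mk_iff' 𝕜 _ v _ hv).mpr ⟨_, rfl⟩

end RCLike

section Line

variable {K V : Type*} [Field K] [AddCommGroup V] [Module K V]

theorem lineMap_rep_ne_zero {x y : ℙ K V} (h : x ≠ y) (z : K) :
    AffineMap.lineMap x.rep y.rep z ≠ 0 := by
  intro h0
  rw [AffineMap.lineMap_apply_module] at h0
  obtain ⟨h1, rfl⟩ := LinearIndependent.pair_iff.mp (linearIndependent_pair_iff_ne.mpr h) _ _ h0
  exact one_ne_zero (sub_zero (1 : K) ▸ h1)

noncomputable def line (x y : ℙ K V) (h : x ≠ y) (z : K) : ℙ K V :=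
  mk K (AffineMap.lineMap x.rep y.rep z) (lineMap_rep_ne_zero h z)

variable {x y : ℙ K V} (h : x ≠ y)

theorem line_zero : line x y h 0 = x := by
  simp only [line, AffineMap.lineMap_apply_zero, mk_rep]

theorem line_one : line x y h 1 = y := by
  simp only [line, AffineMap.lineMap_apply_one, mk_rep]

theorem continuous_line [TopologicalSpace K] [TopologicalSpace V]
    [IsTopologicalAddGroup V] [ContinuousSMul K V] : Continuous (line x y h) :=
  AffineMap.lineMap_continuous.projectivization_mk _

end Line

section Minors

variable {K ι : Type*} [Field K]

def MinorsVanish (x y : ι → K) : Prop :=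
  ∀ k l, x k * y l = x l * y k

theorem mk_eq_mk_iff_minorsVanish (x y : ι → K) (hx : x ≠ 0) (hy : y ≠ 0) :
    mk K x hx = mk K y hy ↔ MinorsVanish x y := by
  rw [mk_eq_mk_iff']
  constructor
  · rintro ⟨c, rfl⟩ k l
    simp only [Pi.smul_apply, smul_eq_mul]
    ring
  · intro h
    obtain ⟨l, hl⟩ := Function.ne_iff.mp hy
    refine ⟨x l / y l, funext fun k => ?_⟩
    simp only [Pi.smul_apply, smul_eq_mul, div_mul_eq_mul_div, div_eq_iff hl, h k l]

theorem finite_setOf_minorsVanish_lineMap {x₁ y₁ x₂ y₂ : ι → K} (h : ¬MinorsVanish y₁ y₂) :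
    {z : K | MinorsVanish (AffineMap.lineMap x₁ y₁ z) (AffineMap.lineMap x₂ y₂ z)}.Finite := by
  simp only [MinorsVanish, not_forall] at h
  obtain ⟨k, l, hkl⟩ := h
  open Polynomial in
  let q (a b : K) : K[X] := (1 - X) * C a + X * C b
  have hq (a b z : K) : (q a b).eval z = (1 - z) * a + z * b := by
    simp only [q, eval_add, eval_mul, eval_sub, eval_one, eval_X, eval_C]
  let p := q (x₁ k) (y₁ k) * q (x₂ l) (y₂ l) - q (x₁ l) (y₁ l) * q (x₂ k) (y₂ k)
  have hp (z : K) : p.eval z = ((1 - z) * x₁ k + z * y₁ k) * ((1 - z) * x₂ l + z * y₂ l) -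
      ((1 - z) * x₁ l + z * y₁ l) * ((1 - z) * x₂ k + z * y₂ k) := by simp [p, hq]
  have hp₀ : p ≠ 0 := fun h0 => hkl <| by simpa [hp, sub_eq_zero] using congrArg (eval 1) h0
  refine (Polynomial.finite_setOfPred_isRoot hp₀).subset fun z hz => ?_
  have hz := hz k l
  simp only [AffineMap.lineMap_apply_module, Pi.add_apply, Pi.smul_apply, smul_eq_mul] at hz
  rw [mem_ofPred_eq, Polynomial.IsRoot, hp, hz, sub_self]

end Minors

end Projectivization

section ProjectiveAction

variable {n : ℕ}

theorem continuous_projAct (γ : GL (Fin n) ℂ) : Continuous (projAct γ) := by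
  unfold projAct
  exact continuous_map _ _ (continuous_const.matrix_mulVec continuous_id)

theorem projAct_mk_eq_projAct_mk_iff (a b : GL (Fin n) ℂ) (u : Fin n → ℂ) (hu : u ≠ 0) :
    projAct a (mk ℂ u hu) = projAct b (mk ℂ u hu) ↔
      MinorsVanish ((a : Matrix (Fin n) (Fin n) ℂ) *ᵥ u) ((b : Matrix (Fin n) (Fin n) ℂ) *ᵥ u) :=
  mk_eq_mk_iff_minorsVanish _ _ _ _

theorem finite_setOf_projAct_line_eq (a b : GL (Fin n) ℂ) {x y : ℙ ℂ (Fin n → ℂ)} (hxy : x ≠ y)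
    (hy : projAct a y ≠ projAct b y) :
    {z : ℂ | projAct a (line x y hxy z) = projAct b (line x y hxy z)}.Finite := by
  have hmul (γ : GL (Fin n) ℂ) (z : ℂ) : (γ : Matrix (Fin n) (Fin n) ℂ) *ᵥ
      AffineMap.lineMap x.rep y.rep z = AffineMap.lineMap (γ.1 *ᵥ x.rep) (γ.1 *ᵥ y.rep) z := by
    simp only [AffineMap.lineMap_apply_module, mulVec_add, mulVec_smul]
  have hy' : ¬MinorsVanish (a.1 *ᵥ y.rep) (b.1 *ᵥ y.rep) := by
    rwa [← projAct_mk_eq_projAct_mk_iff a b y.rep y.rep_nonzero, mk_rep]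
  simpa only [line, projAct_mk_eq_projAct_mk_iff, hmul] using finite_setOf_minorsVanish_lineMap hy'

theorem projAct_eq_of_nonempty_interior (a b : GL (Fin n) ℂ)
    (h : (interior {p | projAct a p = projAct b p}).Nonempty) : projAct a = projAct b := by
  set S := {p | projAct a p = projAct b p}
  obtain ⟨x, hx⟩ := h
  funext y
  by_cases hxy : x = y
  · subst hxy
    exact interior_subset (s := S) hx
  by_contra hy
  have hnhds : line x y hxy ⁻¹' interior S ∈ 𝓝 0 :=
    (continuous_line hxy).continuousAt.preimage_mem_nhds (by rwa [line_zero, isOpen_interior.mem_nhds_iff])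
  exact (finite_setOf_projAct_line_eq a b hxy hy).not_infinite <|
    (infinite_of_mem_nhds 0 hnhds).mono fun z hz => interior_subset (s := S) hz

end ProjectiveAction

/-- Sierpiński's theorem, with local connectedness in place of compactness. -/
theorem eq_univ_of_countable_closed_partition {X ι : Type*} [PseudoEMetricSpace X]
    [CompleteSpace X] [ConnectedSpace X] [LocallyConnectedSpace X] [Countable ι]
    {F : ι → Set X} (hF : ∀ i, IsClosed (F i)) (hcover : ⋃ i, F i = univ)
    (hdisj : ∀ i j, (F i ∩ F j).Nonempty → F i = F j) {i : ι} (hi : (F i).Nonempty) :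
    F i = univ := by
  set K := (⋃ j, interior (F j))ᶜ
  have hK : IsClosed K := (isOpen_iUnion fun _ => isOpen_interior).isClosed_compl
  have mem_interior {x : X} {j : ι} (hxj : x ∈ F j) (hxK : x ∉ K) : x ∈ interior (F j) := by
    obtain ⟨m, hm⟩ := mem_iUnion.mp (not_not.mp hxK)
    exact hdisj m j ⟨x, interior_subset hm, hxj⟩ ▸ hm
  rcases K.eq_empty_or_nonempty with hK₀ | ⟨x₀, hx₀⟩
  · have hopen : IsOpen (F i) := isOpen_iff_forall_mem_open.mpr fun x hx =>
      ⟨interior (F i), interior_subset, isOpen_interior, mem_interior hx (hK₀ ▸ notMem_empty x)⟩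
    exact (isClopen_iff.mp ⟨hF i, hopen⟩).resolve_left hi.ne_empty
  exfalso
  have : Nonempty K := ⟨⟨x₀, hx₀⟩⟩
  have : CompleteSpace K := hK.completeSpace_coe
  obtain ⟨m, y, hy⟩ := nonempty_interior_of_iUnion_of_closed
    (fun j => (hF j).preimage (continuous_subtype_val (p := (· ∈ K))))
    (by simp [← preimage_iUnion, hcover])
  obtain ⟨u, hu, huF⟩ := (mem_nhds_subtype _ _ _).mp (mem_interior_iff_mem_nhds.mp hy)
  have hKu {x : X} (hxK : x ∈ K) (hxu : x ∈ u) : x ∈ F m := huF (show ⟨x, hxK⟩ ∈ _ from hxu)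
  have hyK : ∀ j, y.1 ∉ interior (F j) := by simpa [K] using y.2
  obtain ⟨C, ⟨hCo, hyC, hCc⟩, hCu⟩ :=
    (LocallyConnectedSpace.open_connected_basis y.1).mem_iff.mp hu
  obtain ⟨z, hzC, hzF⟩ := not_subset.mp fun hCF : C ⊆ F m =>
    hyK m (interior_maximal hCF hCo hyC)
  have hzK : z ∉ K := fun hzK => hzF (hKu hzK (hCu hzC))
  obtain ⟨j, hzj⟩ := mem_iUnion.mp (hcover ▸ mem_univ z)
  have hCj : C ⊆ interior (F j) := by
    refine hCc.isPreconnected.subset_of_closure_inter_subset isOpen_interior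
      ⟨z, hzC, mem_interior hzj hzK⟩ fun w ⟨hw, hwC⟩ => ?_
    have hwj : w ∈ F j := closure_minimal interior_subset (hF j) hw
    refine mem_interior hwj fun hwK => hzF ?_
    exact hdisj m j ⟨w, hKu hwK (hCu hwC), hwj⟩ ▸ hzj
  exact hyK j (hCj hyC)

section Rigidity

variable {n : ℕ}

def ambiguitySet (S : Set (GL (Fin n) ℂ)) : Set (ℙ ℂ (Fin n → ℂ)) :=
  ⋃ a ∈ S, ⋃ b ∈ S, ⋃ (_ : projAct a ≠ projAct b), {p | projAct a p = projAct b p}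

variable {S : Set (GL (Fin n) ℂ)}

theorem projAct_eq_of_notMem_ambiguitySet {p : ℙ ℂ (Fin n → ℂ)} (hp : p ∉ ambiguitySet S)
    {a b : GL (Fin n) ℂ} (ha : a ∈ S) (hb : b ∈ S) (h : projAct a p = projAct b p) :
    projAct a = projAct b := by
  by_contra hab
  exact hp (by simp only [ambiguitySet, mem_iUnion]; exact ⟨a, ha, b, hb, hab, h⟩)

theorem dense_compl_ambiguitySet (hS : S.Countable) : Dense (ambiguitySet S)ᶜ := by
  refine dense_of_mem_residual <| isMeagre_biUnion hS fun a _ => isMeagre_biUnion hS fun b _ =>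
    isMeagre_iUnion fun hab => IsNowhereDense.isMeagre ?_
  rw [(isClosed_eq (continuous_projAct a) (continuous_projAct b)).isNowhereDense_iff,
    ← not_nonempty_iff_eq_empty]
  exact mt (projAct_eq_of_nonempty_interior a b) hab

theorem countable_preimage_line_ambiguitySet (hS : S.Countable) {x y : ℙ ℂ (Fin n → ℂ)}
    (hxy : x ≠ y) (hy : y ∉ ambiguitySet S) : (line x y hxy ⁻¹' ambiguitySet S).Countable := by
  simp only [ambiguitySet, preimage_iUnion]
  refine hS.biUnion fun a ha => hS.biUnion fun b hb => countable_iUnion fun hab => ?_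
  have hy' : projAct a y ≠ projAct b y := mt (projAct_eq_of_notMem_ambiguitySet hy ha hb) hab
  exact (finite_setOf_projAct_line_eq a b hxy hy').countable

variable {f : ℙ ℂ (Fin n → ℂ) → ℙ ℂ (Fin n → ℂ)}

theorem projAct_eq_along_curve {X : Type*} [PseudoEMetricSpace X]
    [CompleteSpace X] [ConnectedSpace X] [LocallyConnectedSpace X] (hS : S.Countable)
    (hf : Continuous f) (hfS : ∀ p, ∃ γ ∈ S, f p = projAct γ p) {c : X → ℙ ℂ (Fin n → ℂ)}
    (hc : Continuous c) (hcS : ∀ t, c t ∉ ambiguitySet S) {a b : GL (Fin n) ℂ} (ha : a ∈ S)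
    (hb : b ∈ S) {t₀ t₁ : X} (hfa : f (c t₀) = projAct a (c t₀))
    (hfb : f (c t₁) = projAct b (c t₁)) : projAct a = projAct b := by
  have : Countable S := hS.to_subtype
  set F : S → Set X := fun γ => {t | f (c t) = projAct γ (c t)}
  have hF : F ⟨a, ha⟩ = univ := by
    refine eq_univ_of_countable_closed_partition (F := F)
      (fun γ => isClosed_eq (hf.comp hc) ((continuous_projAct γ.1).comp hc))
      (eq_univ_of_forall fun t => ?_) (fun γ δ ⟨t, hγ, hδ⟩ => ?_) ⟨t₀, hfa⟩
    · obtain ⟨γ, hγ, hfγ⟩ := hfS (c t)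
      exact mem_iUnion.mpr ⟨⟨γ, hγ⟩, hfγ⟩
    · simp only [F, projAct_eq_of_notMem_ambiguitySet (hcS t) γ.2 δ.2 (hγ.symm.trans hδ)]
  have hfa₁ : t₁ ∈ F ⟨a, ha⟩ := hF ▸ mem_univ t₁
  exact projAct_eq_of_notMem_ambiguitySet (hcS t₁) ha hb (hfa₁.symm.trans hfb)

theorem projAct_eq_of_eqOn (hS : S.Countable) (hf : Continuous f)
    (hfS : ∀ p, ∃ γ ∈ S, f p = projAct γ p) {a b : GL (Fin n) ℂ} (ha : a ∈ S) (hb : b ∈ S)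
    {U V : Set (ℙ ℂ (Fin n → ℂ))} (hU : IsOpen U) (hU' : U.Nonempty) (hV : IsOpen V)
    (hV' : V.Nonempty) (hfa : EqOn f (projAct a) U) (hfb : EqOn f (projAct b) V) :
    projAct a = projAct b := by
  have hA := dense_compl_ambiguitySet hS
  obtain ⟨x, hxU, hxA⟩ := hA.inter_open_nonempty U hU hU'
  by_cases hxV : x ∈ V
  · exact projAct_eq_of_notMem_ambiguitySet hxA ha hb ((hfa hxU).symm.trans (hfb hxV))
  obtain ⟨y, hyV, hyA⟩ := hA.inter_open_nonempty V hV hV'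
  have hxy : x ≠ y := by rintro rfl; exact hxV hyV
  have hH := continuous_line (K := ℂ) hxy
  have hZ := countable_preimage_line_ambiguitySet hS hxy hyA
  obtain ⟨z₀, hz₀U, hz₀⟩ := (hZ.dense_compl ℂ).inter_open_nonempty _ (hU.preimage hH)
    ⟨0, by rwa [mem_preimage, line_zero]⟩
  obtain ⟨z₁, hz₁V, hz₁⟩ := (hZ.dense_compl ℂ).inter_open_nonempty _ (hV.preimage hH)
    ⟨1, by rwa [mem_preimage, line_one]⟩
  obtain ⟨σ, hσ⟩ := (hZ.isPathConnected_compl_of_one_lt_rank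
    (by simp [Complex.rank_real_complex])).joinedIn z₀ hz₀ z₁ hz₁
  refine projAct_eq_along_curve hS hf hfS (hH.comp σ.continuous_extend)
    (fun t => ?_) ha hb (t₀ := 0) (t₁ := 1) ?_ ?_
  · obtain ⟨s, hs⟩ : σ.extend t ∈ range σ := σ.extend_range ▸ mem_range_self t
    simpa only [Function.comp_apply, ← hs, mem_compl_iff, mem_preimage] using hσ s
  · simpa using hfa hz₀U
  · simpa using hfb hz₁V

theorem exists_eq_projAct [Nonempty (ℙ ℂ (Fin n → ℂ))] (hS : S.Countable) (hf : Continuous f)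
    (hfS : ∀ p, ∃ γ ∈ S, f p = projAct γ p) : ∃ γ ∈ S, f = projAct γ := by
  set E : GL (Fin n) ℂ → Set (ℙ ℂ (Fin n → ℂ)) := fun γ => {p | f p = projAct γ p}
  have hE (γ) : IsClosed (E γ) := isClosed_eq hf (continuous_projAct γ)
  have hdense : Dense (⋃ γ ∈ S, interior (E γ)) :=
    dense_biUnion_interior_of_closed (fun γ _ => hE γ) hS
      (eq_univ_of_forall fun p => by simpa [E] using hfS p)
  obtain ⟨p₀, hp₀⟩ := hdense.nonempty
  obtain ⟨γ₀, hγ₀, hp₀⟩ := mem_iUnion₂.mp hp₀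
  have hsub : ⋃ γ ∈ S, interior (E γ) ⊆ E γ₀ := iUnion₂_subset fun γ hγ p hp => by
    have := projAct_eq_of_eqOn hS hf hfS hγ₀ hγ isOpen_interior ⟨p₀, hp₀⟩ isOpen_interior ⟨p, hp⟩
      (fun q hq => interior_subset (s := E γ₀) hq) (fun q hq => interior_subset (s := E γ) hq)
    show f p = projAct γ₀ p
    rw [this]
    exact interior_subset (s := E γ) hp
  refine ⟨γ₀, hγ₀, funext fun p => ?_⟩
  exact (hE γ₀).closure_subset_iff.mpr hsub (hdense.closure_eq ▸ mem_univ p)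

end Rigidity

theorem stmt8_general (n : ℕ)
    (Γ : Subgroup (Matrix.GeneralLinearGroup (Fin n) ℂ)) (hΓ : Countable Γ)
    (f : ℙ ℂ (Fin n → ℂ) ≃ₜ ℙ ℂ (Fin n → ℂ))
    (hf : ∀ p : ℙ ℂ (Fin n → ℂ), ∃ γ ∈ Γ, f p = projAct γ p) :
    ∃ γ ∈ Γ, ∀ p : ℙ ℂ (Fin n → ℂ), f p = projAct γ p := by
  rcases isEmpty_or_nonempty (ℙ ℂ (Fin n → ℂ)) with hP | hP
  · exact ⟨1, Γ.one_mem, isEmptyElim⟩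
  obtain ⟨γ, hγ, hfγ⟩ := exists_eq_projAct (Set.countable_coe_iff.mp hΓ) f.continuous hf
  exact ⟨γ, hγ, congrFun hfγ⟩

/-- **Orbit rigidity on complex projective space.** Let `Γ` be a countable subgroup of
`GL_n(ℂ)`, `n ≥ 2`, acting on `ℂP^{n-1}` by projective transformations. Then every
homeomorphism `f` of `ℂP^{n-1}` with `f(p) ∈ Γ · p` for all `p` is given by a single
element of `Γ`. -/
theorem stmt8 (n : ℕ) (hn : 2 ≤ n)
    (Γ : Subgroup (Matrix.GeneralLinearGroup (Fin n) ℂ)) (hΓ : Countable Γ)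
    (f : ℙ ℂ (Fin n → ℂ) ≃ₜ ℙ ℂ (Fin n → ℂ))
    (hf : ∀ p : ℙ ℂ (Fin n → ℂ), ∃ γ ∈ Γ, f p = projAct γ p) :
    ∃ γ ∈ Γ, ∀ p : ℙ ℂ (Fin n → ℂ), f p = projAct γ p :=
  stmt8_general n Γ hΓ f hf
end

section
/- Let n ≥ 2 and let G_n be the group (under composition) of all homeomorphisms f of the torus T^n = ℝⁿ/ℤⁿ for which there exists a finite set S ⊆ GL_n(ℤ) such that for every x ∈ T^n there is γ ∈ S with f(x) = γ·x. Then G_n is residually finite: for every f ∈ G_n with f ≠ id there exist a finite group H and a group homomorphism φ : G_n → H with φ(f) ≠ 1. -/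
/-- The group of self-homeomorphisms of a topological space, under composition. -/
instance homeomorphGroup (X : Type*) [TopologicalSpace X] : Group (X ≃ₜ X) where
  mul f g := g.trans f
  one := Homeomorph.refl X
  inv := Homeomorph.symm
  mul_assoc _ _ _ := Homeomorph.ext fun _ => rfl
  one_mul _ := Homeomorph.ext fun _ => rfl
  mul_one _ := Homeomorph.ext fun _ => rfl
  inv_mul_cancel f := Homeomorph.ext fun x => f.symm_apply_apply x

/-- The set of homeomorphisms of the torus `Tⁿ` that agree pointwise with finitely many
elements of `GL_n(ℤ)`. -/
def piecewiseLinearHomeos (n : ℕ) :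
    Set ((Fin n → AddCircle (1 : ℝ)) ≃ₜ (Fin n → AddCircle (1 : ℝ))) :=
  {f | ∃ S : Finset (Matrix.GeneralLinearGroup (Fin n) ℤ),
    ∀ x : Fin n → AddCircle (1 : ℝ),
      ∃ γ ∈ S, f x = torusAct (γ : Matrix (Fin n) (Fin n) ℤ) x}

/-!
A nontrivial `f` moves some point of the open set `{x | f x ≠ x}`, and torsion points are
dense in the torus, so `f` moves a point `y` with `m • y = 0`, `m > 0`. Every element of the
group acts at each point through an integer matrix, hence maps the finite set of `m`-torsion
points to itself; the action on that set is a homomorphism to a finite permutation group which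
does not kill `f`.
-/

universe u

theorem exists_monoidHom_finite_ne_one_of_finite_invariant {G : Type*} {X : Type u} [Group G]
    [MulAction G X] {T : Set X} (hT : T.Finite) (hinv : ∀ g : G, ∀ x ∈ T, g • x ∈ T)
    {g : G} {x : X} (hx : x ∈ T) (hgx : g • x ≠ x) :
    ∃ (H : Type u) (_ : Group H) (_ : Finite H) (φ : G →* H), φ g ≠ 1 := by
  let T' : SubMulAction G X := { carrier := T, smul_mem' := hinv }
  have : Finite T' := hT.to_subtype
  refine ⟨Equiv.Perm T', inferInstance, inferInstance, MulAction.toPermHom G T', fun h => ?_⟩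
  exact hgx (congrArg Subtype.val (Equiv.ext_iff.1 h ⟨x, hx⟩))

theorem AddCircle.dense_setOf_isOfFinAddOrder (p : ℝ) [hp : Fact (0 < p)] :
    Dense {u : AddCircle p | IsOfFinAddOrder u} := by
  have hdense : DenseRange fun q : ℚ => ((q * p : ℝ) : AddCircle p) :=
    (QuotientAddGroup.mk_surjective.denseRange.comp
      ((Homeomorph.mulRight₀ p hp.out.ne').surjective.denseRange.comp Rat.denseRange_cast
        (Homeomorph.mulRight₀ p hp.out.ne').continuous) continuous_quotient_mk')
  refine hdense.mono ?_
  rintro _ ⟨q, rfl⟩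
  exact addOrderOf_pos_iff.1 (by rw [AddCircle.addOrderOf_coe_rat]; exact q.pos)

theorem dense_setOf_isOfFinAddOrder_pi_addCircle (ι : Type*) [Finite ι] (p : ℝ) [Fact (0 < p)] :
    Dense {x : ι → AddCircle p | IsOfFinAddOrder x} :=
  (dense_pi Set.univ fun _ _ => AddCircle.dense_setOf_isOfFinAddOrder p).mono
    fun _ hx => IsOfFinAddOrder.pi (Set.mem_univ_pi.1 hx)

theorem finite_setOf_nsmul_eq_zero_pi_addCircle (ι : Type*) [Finite ι] (p : ℝ) {m : ℕ}
    (hm : 0 < m) : {x : ι → AddCircle p | m • x = 0}.Finite := by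
  refine (Set.Finite.pi fun _ => AddCircle.finite_torsion p hm).subset fun x hx i _ => ?_
  exact congrFun hx i

instance Homeomorph.applyMulAction (X : Type*) [TopologicalSpace X] : MulAction (X ≃ₜ X) X where
  smul f x := f x
  one_smul _ := rfl
  mul_smul _ _ _ := rfl

theorem torusAct_zero {n : ℕ} (γ : Matrix (Fin n) (Fin n) ℤ) : torusAct γ 0 = 0 := by
  funext j
  simp only [torusAct, Pi.zero_apply, smul_zero, Finset.sum_const_zero]

theorem torusAct_nsmul {n : ℕ} (γ : Matrix (Fin n) (Fin n) ℤ) (m : ℕ)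
    (x : Fin n → AddCircle (1 : ℝ)) : torusAct γ (m • x) = m • torusAct γ x := by
  funext j
  simp only [torusAct, Pi.smul_apply, Finset.smul_sum, smul_comm m]

theorem nsmul_apply_eq_zero_of_mem_piecewiseLinearHomeos {n : ℕ}
    {f : (Fin n → AddCircle (1 : ℝ)) ≃ₜ (Fin n → AddCircle (1 : ℝ))}
    (hf : f ∈ piecewiseLinearHomeos n) {m : ℕ} {x : Fin n → AddCircle (1 : ℝ)}
    (hx : m • x = 0) : m • f x = 0 := by
  obtain ⟨S, hS⟩ := hf
  obtain ⟨γ, -, hγ⟩ := hS x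
  rw [hγ, ← torusAct_nsmul, hx, torusAct_zero]

theorem stmt10_general (n : ℕ)
    (G : Subgroup ((Fin n → AddCircle (1 : ℝ)) ≃ₜ (Fin n → AddCircle (1 : ℝ))))
    (hG : (G : Set ((Fin n → AddCircle (1 : ℝ)) ≃ₜ (Fin n → AddCircle (1 : ℝ)))) =
      piecewiseLinearHomeos n)
    (f : G) (hf : f ≠ 1) :
    ∃ (H : Type) (_ : Group H) (_ : Finite H) (φ : G →* H), φ f ≠ 1 := by
  have hmoved_open : IsOpen {x : Fin n → AddCircle (1 : ℝ) | f • x ≠ x} :=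
    isOpen_ne_fun f.1.continuous continuous_id
  have hmoved_nonempty : ∃ x : Fin n → AddCircle (1 : ℝ), f • x ≠ x := by
    by_contra! h
    exact hf (Subtype.ext (Homeomorph.ext h))
  obtain ⟨y, hfy, hy⟩ := (dense_setOf_isOfFinAddOrder_pi_addCircle (Fin n) 1).inter_open_nonempty
    _ hmoved_open hmoved_nonempty
  refine exists_monoidHom_finite_ne_one_of_finite_invariant
    (finite_setOf_nsmul_eq_zero_pi_addCircle (Fin n) 1 hy.addOrderOf_pos) (fun g z hz => ?_)
    (addOrderOf_nsmul_eq_zero y) hfy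
  exact nsmul_apply_eq_zero_of_mem_piecewiseLinearHomeos (hG ▸ g.2) hz

/-- **The piecewise `GL_n(ℤ)` group is residually finite.** Let `G_n` be the group, under
composition, of all homeomorphisms of the torus `Tⁿ` (`n ≥ 2`) agreeing pointwise with
finitely many elements of `GL_n(ℤ)`. Then for every `f ≠ id` in `G_n` there are a finite
group `H` and a homomorphism `φ : G_n → H` with `φ(f) ≠ 1`. -/
theorem stmt10 (n : ℕ) (hn : 2 ≤ n)
    (G : Subgroup ((Fin n → AddCircle (1 : ℝ)) ≃ₜ (Fin n → AddCircle (1 : ℝ))))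
    (hG : (G : Set ((Fin n → AddCircle (1 : ℝ)) ≃ₜ (Fin n → AddCircle (1 : ℝ)))) =
      piecewiseLinearHomeos n)
    (f : G) (hf : f ≠ 1) :
    ∃ (H : Type) (_ : Group H) (_ : Finite H) (φ : G →* H), φ f ≠ 1 :=
  stmt10_general n G hG f hf
end

section
/- Let X be a nonempty connected, locally connected, locally compact Hausdorff topological space, and let (Y_i)_{i∈ℕ} be a countable family of closed subsets of X with ⋃_{i∈ℕ} Y_i = X, such that Y_i ∩ Y_j is small for all i ≠ j and Int(Y_i) ∩ Y_j = ∅ for all i ≠ j. Assume Y_i ≠ X for every i. Then there exists a nonempty open set U ⊆ X with compact closure such that U ∩ Y_0 = ∅ and U ∩ Y_j ≠ ∅ for infinitely many j. -/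
open Set Topology

section

variable {X : Type*} [TopologicalSpace X]

namespace SmallSet

variable {A B : Set X}

theorem empty : SmallSet (∅ : Set X) :=
  ⟨isClosed_empty, interior_empty, fun U _ hU => by simpa using hU⟩

theorem isClosed (hA : SmallSet A) : IsClosed A := hA.1

theorem interior_eq_empty (hA : SmallSet A) : interior A = ∅ := hA.2.1

theorem isPreconnected_diff (hA : SmallSet A) {U : Set X} (hUo : IsOpen U)
    (hU : IsPreconnected U) : IsPreconnected (U \ A) :=
  hA.2.2 U hUo hU

theorem dense_compl (hA : SmallSet A) : Dense Aᶜ :=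
  interior_eq_empty_iff_dense_compl.1 hA.interior_eq_empty

theorem union (hA : SmallSet A) (hB : SmallSet B) : SmallSet (A ∪ B) :=
  ⟨hA.isClosed.union hB.isClosed,
    (interior_union_isClosed_of_interior_empty hA.isClosed hB.interior_eq_empty).trans
      hA.interior_eq_empty,
    fun U hUo hU => by
      rw [← sdiff_sdiff]
      exact hB.isPreconnected_diff (hUo.sdiff hA.isClosed) (hA.isPreconnected_diff hUo hU)⟩

theorem biUnion_finset {ι : Type*} (s : Finset ι) {f : ι → Set X}
    (h : ∀ i ∈ s, SmallSet (f i)) : SmallSet (⋃ i ∈ s, f i) := by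
  classical
  induction s using Finset.induction_on with
  | empty => simpa using SmallSet.empty
  | insert i s _ ih =>
    rw [Finset.set_biUnion_insert]
    exact (h i (s.mem_insert_self i)).union (ih fun j hj => h j (Finset.mem_insert_of_mem hj))

theorem compl_subset_of_closure_diff_subset [PreconnectedSpace X] (hA : SmallSet A)
    {V : Set X} (hV : IsOpen V) (hVA : (V \ A).Nonempty) (h : closure V \ A ⊆ V) :
    Aᶜ ⊆ V := by
  have hpre : IsPreconnected Aᶜ := by
    simpa [compl_eq_univ_sdiff] using hA.isPreconnected_diff isOpen_univ isPreconnected_univ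
  exact hpre.subset_of_closure_inter_subset hV (hVA.mono fun x hx => ⟨hx.2, hx.1⟩)
    fun x hx => h ⟨hx.1, hx.2⟩

end SmallSet

theorem IsPreconnected.subset_of_finite_closed_cover {ι : Type*} {S : Set X}
    (hS : IsPreconnected S) {F : Finset ι} {Y : ι → Set X} (hY : ∀ i ∈ F, IsClosed (Y i))
    (hcov : S ⊆ ⋃ i ∈ F, Y i) (hdisj : ∀ i ∈ F, ∀ j ∈ F, i ≠ j → Disjoint S (Y i ∩ Y j))
    {i : ι} (hi : i ∈ F) (hSi : (S ∩ Y i).Nonempty) : S ⊆ Y i := by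
  classical
  set T := ⋃ j ∈ F.erase i, Y j
  have hT : IsClosed T :=
    (F.erase i).finite_toSet.isClosed_biUnion fun j hj => hY j (F.mem_of_mem_erase hj)
  have hcovT : S ⊆ Y i ∪ T := fun x hx => by
    obtain ⟨j, hj, hxj⟩ := mem_iUnion₂.1 (hcov hx)
    by_cases hji : j = i
    · exact Or.inl (hji ▸ hxj)
    · exact Or.inr (mem_iUnion₂.2 ⟨j, F.mem_erase.2 ⟨hji, hj⟩, hxj⟩)
  intro x hx
  by_contra hxi
  obtain ⟨y, hyS, hyi, hyT⟩ := isPreconnected_closed_iff.1 hS _ _ (hY i hi) hT hcovT hSi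
    ⟨x, hx, (hcovT hx).resolve_left hxi⟩
  obtain ⟨j, hj, hyj⟩ := mem_iUnion₂.1 hyT
  exact disjoint_left.1 (hdisj i hi j (F.mem_of_mem_erase hj) (F.ne_of_mem_erase hj).symm)
    hyS ⟨hyi, hyj⟩

theorem IsPreconnected.exists_subset_of_finite_inter_nonempty {ι : Type*} {Y : ι → Set X}
    (hclosed : ∀ i, IsClosed (Y i)) (hcover : ⋃ i, Y i = univ)
    (hsmall : ∀ i j, i ≠ j → SmallSet (Y i ∩ Y j)) {U : Set X} (hU : IsPreconnected U)
    (hUo : IsOpen U) (hUne : U.Nonempty) (hfin : {i | (U ∩ Y i).Nonempty}.Finite) :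
    ∃ i, U ⊆ Y i := by
  classical
  set F := hfin.toFinset
  set Z := ⋃ p ∈ F.offDiag, Y p.1 ∩ Y p.2
  have hZ : SmallSet Z :=
    SmallSet.biUnion_finset _ fun p hp => hsmall _ _ (Finset.mem_offDiag.1 hp).2.2
  have hmemF : ∀ y ∈ U, y ∈ ⋃ i ∈ F, Y i := fun y hy => by
    obtain ⟨i, hi⟩ := mem_iUnion.1 (hcover ▸ mem_univ y)
    exact mem_iUnion₂.2 ⟨i, hfin.mem_toFinset.2 ⟨y, hy, hi⟩, hi⟩
  obtain ⟨x, hxU, hxZ⟩ := hZ.dense_compl.inter_open_nonempty U hUo hUne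
  obtain ⟨i, hiF, hxi⟩ := mem_iUnion₂.1 (hmemF x hxU)
  have hsub : U \ Z ⊆ Y i :=
    (hZ.isPreconnected_diff hUo hU).subset_of_finite_closed_cover (fun j _ => hclosed j)
      (fun y hy => hmemF y hy.1)
      (fun j hj k hk hjk => disjoint_left.2 fun y hy hyjk =>
        hy.2 (mem_iUnion₂.2 ⟨(j, k), Finset.mem_offDiag.2 ⟨hj, hk, hjk⟩, hyjk⟩))
      hiF ⟨x, ⟨hxU, hxZ⟩, hxi⟩
  exact ⟨i, (hZ.dense_compl.open_subset_closure_inter hUo).trans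
    ((hclosed i).closure_subset_iff.2 hsub)⟩

theorem exists_isOpen_isPreconnected_isCompact_closure_subset [LocallyConnectedSpace X]
    [LocallyCompactSpace X] [T2Space X] {x : X} {O : Set X} (hO : O ∈ 𝓝 x) :
    ∃ U ⊆ O, IsOpen U ∧ IsPreconnected U ∧ IsCompact (closure U) ∧ x ∈ U := by
  obtain ⟨K, hK, hKO, hKc⟩ := local_compact_nhds hO
  obtain ⟨U, ⟨hUo, hxU, hUc⟩, hUK⟩ := (LocallyConnectedSpace.open_connected_basis x).mem_iff.1 hK
  exact ⟨U, hUK.trans hKO, hUo, hUc.isPreconnected, hKc.closure_of_subset hUK, hxU⟩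
end

theorem stmt12_general (X : Type*) [TopologicalSpace X] [ConnectedSpace X]
    [LocallyConnectedSpace X] [LocallyCompactSpace X] [T2Space X]
    (Y : ℕ → Set X) (hclosed : ∀ i, IsClosed (Y i))
    (hcover : ⋃ i, Y i = Set.univ)
    (hsmall : ∀ i j, i ≠ j → SmallSet (Y i ∩ Y j))
    (hint : ∀ i j, i ≠ j → interior (Y i) ∩ Y j = ∅)
    (hne : ∀ i, Y i ≠ Set.univ) :
    ∃ U : Set X, IsOpen U ∧ U.Nonempty ∧ IsCompact (closure U) ∧
      U ∩ Y 0 = ∅ ∧ {j : ℕ | (U ∩ Y j).Nonempty}.Infinite := by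
  by_contra! hfin
  have hlocal : ∀ x ∉ Y 0, ∃ j, x ∈ interior (Y j) := fun x hx => by
    obtain ⟨U, hUY, hUo, hU, hUc, hxU⟩ :=
      exists_isOpen_isPreconnected_isCompact_closure_subset ((hclosed 0).isOpen_compl.mem_nhds hx)
    obtain ⟨j, hj⟩ := hU.exists_subset_of_finite_inter_nonempty hclosed hcover hsmall hUo
      ⟨x, hxU⟩ (hfin U hUo ⟨x, hxU⟩ hUc (subset_compl_iff_disjoint_right.1 hUY).inter_eq)
    exact ⟨j, interior_maximal hj hUo hxU⟩
  obtain ⟨x, hx⟩ := (ne_univ_iff_exists_notMem _).1 (hne 0)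
  obtain ⟨j, hxj⟩ := hlocal x hx
  have hj : 0 ≠ j := by rintro rfl; exact hx (interior_subset hxj)
  have hfrontier : closure (interior (Y j)) \ (Y 0 ∩ Y j) ⊆ interior (Y j) := by
    rintro y ⟨hycl, hyA⟩
    have hyj : y ∈ Y j := (hclosed j).closure_subset_iff.2 interior_subset hycl
    obtain ⟨i, hyi⟩ := hlocal y fun hy0 => hyA ⟨hy0, hyj⟩
    obtain rfl : i = j := by
      by_contra hij
      exact (hint i j hij).subset ⟨hyi, hyj⟩
    exact hyi
  have hcompl := (hsmall 0 j hj).compl_subset_of_closure_diff_subset isOpen_interior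
    ⟨x, hxj, fun h => hx h.1⟩ hfrontier
  refine hne j (eq_univ_of_forall fun y => ?_)
  by_cases hy : y ∈ Y 0 ∩ Y j
  · exact hy.2
  · exact interior_subset (hcompl hy)

/-- The key lemma in the generalized Sierpinski theorem: given a countable closed cover
`(Y i)` of a nonempty connected, locally connected, locally compact Hausdorff space,
with small pairwise intersections, `interior (Y i) ∩ Y j = ∅` for `i ≠ j`, and no `Y i`
equal to the whole space, there is a nonempty precompact open set `U` disjoint from `Y 0`
and meeting infinitely many of the `Y j`. -/
theorem stmt12 (X : Type*) [TopologicalSpace X] [Nonempty X] [ConnectedSpace X]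
    [LocallyConnectedSpace X] [LocallyCompactSpace X] [T2Space X]
    (Y : ℕ → Set X) (hclosed : ∀ i, IsClosed (Y i))
    (hcover : ⋃ i, Y i = Set.univ)
    (hsmall : ∀ i j, i ≠ j → SmallSet (Y i ∩ Y j))
    (hint : ∀ i j, i ≠ j → interior (Y i) ∩ Y j = ∅)
    (hne : ∀ i, Y i ≠ Set.univ) :
    ∃ U : Set X, IsOpen U ∧ U.Nonempty ∧ IsCompact (closure U) ∧
      U ∩ Y 0 = ∅ ∧ {j : ℕ | (U ∩ Y j).Nonempty}.Infinite :=
  stmt12_general X Y hclosed hcover hsmall hint hne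
end

section
/- Let X be a nonempty connected, locally connected, locally compact Hausdorff topological space. If A and B are small subsets of X, then A ∪ B is small. -/
/-- A finite union of small sets is small: the union of two small subsets of a nonempty
connected, locally connected, locally compact Hausdorff space is small. -/
theorem stmt13 (X : Type*) [TopologicalSpace X] [Nonempty X] [ConnectedSpace X]
    [LocallyConnectedSpace X] [LocallyCompactSpace X] [T2Space X]
    (A B : Set X) (hA : SmallSet A) (hB : SmallSet B) :
    SmallSet (A ∪ B) := by
  obtain ⟨hAc, hAi, hAp⟩ := hA
  obtain ⟨hBc, hBi, hBp⟩ := hB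
  refine ⟨hAc.union hBc, ?_, ?_⟩
  · have h1 : interior (A ∪ B) \ A ⊆ interior B := by
      apply interior_maximal
      · rintro x ⟨hx, hxA⟩
        rcases interior_subset hx with h | h
        · exact absurd h hxA
        · exact h
      · exact isOpen_interior.sdiff hAc
    rw [hBi] at h1
    have h2 : interior (A ∪ B) ⊆ A := fun x hx => by
      by_contra hxA
      exact h1 ⟨hx, hxA⟩
    have h3 : interior (A ∪ B) ⊆ interior A :=
      interior_maximal h2 isOpen_interior
    rw [hAi] at h3
    exact Set.eq_empty_iff_forall_notMem.mpr fun x hx => h3 hx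
  · intro U hU hUc
    rw [← Set.diff_diff]
    exact hBp _ (hU.sdiff hAc) (hAp U hU hUc)
end

section
/- Let Γ be a countable group acting freely by homeomorphisms on a nonempty compact connected Hausdorff topological space X (freely means γ·x = x for some x implies γ = 1). Then for every homeomorphism f : X → X satisfying f(x) ∈ Γ·x for all x ∈ X, there exists γ ∈ Γ with f(x) = γ·x for all x ∈ X. -/
open Set

section Sierpinski

variable {Y : Type*} [TopologicalSpace Y]

/-- In a compact Hausdorff space, a point can be separated from a disjoint closed set
by a clopen set containing its connected component. -/
private lemma clopen_sep [CompactSpace Y] [T2Space Y] (x : Y) {K : Set Y}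
    (hK : IsClosed K) (hd : connectedComponent x ∩ K = ∅) :
    ∃ Z : Set Y, IsClopen Z ∧ x ∈ Z ∧ Z ∩ K = ∅ := by
  rw [connectedComponent_eq_iInter_isClopen] at hd
  have hd' : (K ∩ ⋂ s : {s : Set Y // IsClopen s ∧ x ∈ s}, (s : Set Y)) = ∅ := by
    rw [inter_comm]; exact hd
  obtain ⟨t, ht⟩ := hK.isCompact.elim_finite_subfamily_closed _ (fun s => s.2.1.1) hd'
  refine ⟨⋂ i ∈ t, (i : Set Y), ?_, ?_, ?_⟩
  · exact isClopen_biInter_finset fun i _ => i.2.1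
  · exact mem_iInter₂.2 fun i _ => i.2.2
  · rw [inter_comm]; exact ht

/-- Boundary bumping: in a compact connected Hausdorff space, the connected component of a
point in the complement of a nonempty open set meets the closure of that open set. -/
private lemma bb [CompactSpace Y] [T2Space Y] [ConnectedSpace Y]
    {V : Set Y} (hV : IsOpen V) (hVne : V.Nonempty) {x : Y} (hx : x ∈ Vᶜ) :
    (connectedComponentIn Vᶜ x ∩ closure V).Nonempty := by
  by_contra hcon
  rw [not_nonempty_iff_eq_empty] at hcon
  have hMc : IsClosed (Vᶜ) := hV.isClosed_compl
  haveI : CompactSpace (Vᶜ : Set Y) := isCompact_iff_compactSpace.mp hMc.isCompact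
  set x' : (Vᶜ : Set Y) := ⟨x, hx⟩ with hx'
  have himg : connectedComponentIn Vᶜ x = Subtype.val '' connectedComponent x' :=
    connectedComponentIn_eq_image hx
  have hdis : connectedComponent x' ∩ (Subtype.val ⁻¹' closure V : Set (Vᶜ : Set Y)) = ∅ := by
    ext z
    simp only [mem_inter_iff, mem_preimage, mem_empty_iff_false, iff_false, not_and]
    intro hz hz2
    have : (z : Y) ∈ connectedComponentIn Vᶜ x ∩ closure V :=
      ⟨himg ▸ ⟨z, hz, rfl⟩, hz2⟩
    rw [hcon] at this
    exact this
  obtain ⟨Z, hZclopen, hxZ, hZK⟩ :=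
    clopen_sep x' (isClosed_closure.preimage continuous_subtype_val) hdis
  obtain ⟨O, hO, hZO⟩ := isOpen_induced_iff.mp hZclopen.2
  have hWeq : Subtype.val '' Z = O ∩ (closure V)ᶜ := by
    ext y
    constructor
    · rintro ⟨z, hz, rfl⟩
      refine ⟨by rw [← hZO] at hz; exact hz, fun hy => ?_⟩
      have : (z : (Vᶜ : Set Y)) ∈ Z ∩ (Subtype.val ⁻¹' closure V) := ⟨hz, hy⟩
      rw [hZK] at this; exact this
    · rintro ⟨hyO, hyV⟩
      have hyM : y ∈ Vᶜ := fun hyv => hyV (subset_closure hyv)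
      exact ⟨⟨y, hyM⟩, by rw [← hZO]; exact hyO, rfl⟩
  have hWclosed : IsClosed (Subtype.val '' Z) :=
    ((hZclopen.1.isCompact).image continuous_subtype_val).isClosed
  have hWopen : IsOpen (Subtype.val '' Z) := by
    rw [hWeq]; exact hO.inter isClosed_closure.isOpen_compl
  rcases isClopen_iff.mp ⟨hWclosed, hWopen⟩ with h | h
  · have : x ∈ Subtype.val '' Z := ⟨x', hxZ, rfl⟩
    rw [h] at this; exact this
  · obtain ⟨v, hv⟩ := hVne
    have : v ∈ Subtype.val '' Z := h ▸ mem_univ v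
    rw [hWeq] at this
    exact this.2 (subset_closure hv)

/-- Cut-wire lemma: given disjoint closed sets `A`, `B` in a compact connected Hausdorff
space with `B` nonempty and proper, there is a subcontinuum avoiding `A`, meeting `B`,
and not contained in `B`. -/
private lemma cutwire [CompactSpace Y] [T2Space Y] [ConnectedSpace Y]
    {A B : Set Y} (hA : IsClosed A) (hB : IsClosed B) (hAB : Disjoint A B)
    (hBne : B.Nonempty) (hBproper : B ≠ univ) :
    ∃ C : Set Y, IsClosed C ∧ IsConnected C ∧ C ∩ A = ∅ ∧
      (C ∩ B).Nonempty ∧ (C \ B).Nonempty := by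
  obtain ⟨p, hp⟩ : ∃ p, p ∉ B := by
    by_contra h; push_neg at h; exact hBproper (eq_univ_of_forall h)
  have hA' : IsClosed (A ∪ {p}) := hA.union isClosed_singleton
  have hdisj : Disjoint (A ∪ {p}) B :=
    Disjoint.union_left hAB (disjoint_singleton_left.mpr hp)
  obtain ⟨U, W, hU, hW, hAU, hBW, hUW⟩ := normal_separation hA' hB hdisj
  have hclUB : closure U ∩ B = ∅ := by
    have h1 : closure U ⊆ Wᶜ := closure_minimal (fun u hu hw => hUW.le_bot ⟨hu, hw⟩)
      hW.isClosed_compl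
    ext y; simp only [mem_inter_iff, mem_empty_iff_false, iff_false, not_and]
    exact fun hy hyB => h1 hy (hBW hyB)
  obtain ⟨x, hxB⟩ := hBne
  have hxM : x ∈ Uᶜ := fun hxU => by
    have : x ∈ closure U ∩ B := ⟨subset_closure hxU, hxB⟩
    rw [hclUB] at this; exact this
  refine ⟨connectedComponentIn Uᶜ x, ?_, ?_, ?_, ?_, ?_⟩
  · have hMc : IsClosed (Uᶜ) := hU.isClosed_compl
    haveI : CompactSpace (Uᶜ : Set Y) := isCompact_iff_compactSpace.mp hMc.isCompact
    rw [connectedComponentIn_eq_image hxM]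
    exact ((isClosed_connectedComponent).isCompact.image continuous_subtype_val).isClosed
  · exact ⟨⟨x, mem_connectedComponentIn hxM⟩, isPreconnected_connectedComponentIn⟩
  · ext y; simp only [mem_inter_iff, mem_empty_iff_false, iff_false, not_and]
    exact fun hy hyA => (connectedComponentIn_subset _ _ hy) (hAU (Or.inl hyA))
  · exact ⟨x, mem_connectedComponentIn hxM, hxB⟩
  · obtain ⟨y, hy1, hy2⟩ := bb hU ⟨p, hAU (Or.inr rfl)⟩ hxM
    refine ⟨y, hy1, fun hyB => ?_⟩
    have : y ∈ closure U ∩ B := ⟨hy2, hyB⟩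
    rw [hclUB] at this; exact this

end Sierpinski

/-- If a countable group `Γ` acts freely by homeomorphisms on a nonempty compact connected
Hausdorff space `X`, then every inner orbit equivalence of `(X, Γ)` is given by a single
element of `Γ`. -/
theorem stmt15 (X : Type*) [TopologicalSpace X] [Nonempty X] [CompactSpace X]
    [ConnectedSpace X] [T2Space X]
    (Γ : Type*) [Group Γ] [Countable Γ] [MulAction Γ X]
    (hcont : ∀ γ : Γ, Continuous fun x : X => γ • x)
    (hfree : ∀ (γ : Γ) (x : X), γ • x = x → γ = 1)
    (f : X ≃ₜ X) (hf : ∀ x : X, f x ∈ MulAction.orbit Γ x) :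
    ∃ γ : Γ, ∀ x : X, f x = γ • x := by
  classical
  set E : Γ → Set X := fun γ => {x | f x = γ • x} with hE
  have hEclosed : ∀ γ, IsClosed (E γ) := fun γ => isClosed_eq f.continuous (hcont γ)
  have hEcover : ∀ x : X, ∃ γ, x ∈ E γ := by
    intro x
    obtain ⟨γ, hγ⟩ := hf x
    exact ⟨γ, hγ.symm⟩
  have hEdisj : ∀ {γ δ : Γ}, γ ≠ δ → E γ ∩ E δ = ∅ := by
    intro γ δ hne
    ext x
    simp only [mem_inter_iff, mem_empty_iff_false, iff_false, not_and]
    intro h1 h2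
    have h3 : γ • x = δ • x := h1.symm.trans h2
    have h4 : (δ⁻¹ * γ) • x = x := by rw [mul_smul, h3, inv_smul_smul]
    exact hne (inv_mul_eq_one.mp (hfree (δ⁻¹ * γ) x h4)).symm
  by_contra hcon
  push_neg at hcon
  have hEproper : ∀ γ, E γ ≠ univ := by
    intro γ h
    obtain ⟨x, hx⟩ := hcon γ
    exact hx (h ▸ mem_univ x : x ∈ E γ)
  obtain ⟨e, he⟩ := exists_surjective_nat Γ
  -- invariant for the nested sequence of continua
  set Good : ℕ → Set X → Γ → Prop := fun n C j =>
    IsClosed C ∧ IsConnected C ∧ (∀ k < n, C ∩ E (e k) = ∅) ∧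
      (C ∩ E j).Nonempty ∧ (C \ E j).Nonempty with hGood
  -- base case
  obtain ⟨x₀⟩ := ‹Nonempty X›
  obtain ⟨γ₀, hγ₀⟩ := hEcover x₀
  have hbase : Good 0 univ γ₀ := by
    refine ⟨isClosed_univ, isConnected_univ, fun k hk => absurd hk (Nat.not_lt_zero k),
      ⟨x₀, mem_univ x₀, hγ₀⟩, ?_⟩
    obtain ⟨z, hz⟩ : ∃ z, z ∉ E γ₀ := by
      by_contra h; push_neg at h; exact hEproper γ₀ (eq_univ_of_forall h)
    exact ⟨z, mem_univ z, hz⟩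
  -- inductive step
  have hstep : ∀ (n : ℕ) (C : Set X) (j : Γ), Good n C j →
      ∃ C' j', C' ⊆ C ∧ Good (n + 1) C' j' := by
    intro n C j hG
    obtain ⟨hCcl, hCconn, hCdis, hCj1, hCj2⟩ := hG
    haveI : CompactSpace C := isCompact_iff_compactSpace.mp (hCcl.isCompact)
    haveI : ConnectedSpace C := Subtype.connectedSpace hCconn
    have hnot : ∀ δ : Γ, ¬ C ⊆ E δ := by
      intro δ hsub
      obtain ⟨y, hyC, hyj⟩ := hCj1
      have hyδ := hsub hyC
      have hδj : δ = j := by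
        by_contra hne
        have : y ∈ E δ ∩ E j := ⟨hyδ, hyj⟩
        rw [hEdisj hne] at this; exact this
      subst hδj
      obtain ⟨z, hzC, hzj⟩ := hCj2
      exact hzj (hsub hzC)
    obtain ⟨y, hyC, hyE⟩ := not_subset.mp (hnot (e n))
    obtain ⟨δ, hyδ⟩ := hEcover y
    have hδne : δ ≠ e n := fun h => hyE (h ▸ hyδ)
    -- apply cutwire in the subtype C
    have hABdisj : Disjoint ((Subtype.val ⁻¹' E (e n)) : Set C)
        ((Subtype.val ⁻¹' E δ) : Set C) := by
      rw [Set.disjoint_iff_inter_eq_empty, ← preimage_inter, hEdisj hδne.symm]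
      simp
    have hBne : ((Subtype.val ⁻¹' E δ) : Set C).Nonempty := ⟨⟨y, hyC⟩, hyδ⟩
    have hBproper : ((Subtype.val ⁻¹' E δ) : Set C) ≠ univ := by
      obtain ⟨z, hzC, hzδ⟩ := not_subset.mp (hnot δ)
      intro h
      exact hzδ ((h ▸ mem_univ (⟨z, hzC⟩ : C)) : (⟨z, hzC⟩ : C) ∈ Subtype.val ⁻¹' E δ)
    obtain ⟨C'', hC''cl, hC''conn, hC''A, hC''B1, hC''B2⟩ :=
      cutwire ((hEclosed (e n)).preimage continuous_subtype_val)
        ((hEclosed δ).preimage continuous_subtype_val) hABdisj hBne hBproper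
    refine ⟨Subtype.val '' C'', δ, ?_, ?_, ?_, ?_, ?_, ?_⟩
    · rintro _ ⟨z, _, rfl⟩; exact z.2
    · exact (hC''cl.isCompact.image continuous_subtype_val).isClosed
    · exact hC''conn.image _ continuous_subtype_val.continuousOn
    · intro k hk
      rcases Nat.lt_succ_iff_lt_or_eq.mp hk with h | h
      · ext w
        simp only [mem_inter_iff, mem_empty_iff_false, iff_false, not_and]
        rintro ⟨z, hz, rfl⟩ hwE
        have : (z : X) ∈ C ∩ E (e k) := ⟨z.2, hwE⟩
        rw [hCdis k h] at this; exact this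
      · subst h
        ext w
        simp only [mem_inter_iff, mem_empty_iff_false, iff_false, not_and]
        rintro ⟨z, hz, rfl⟩ hwE
        have : z ∈ C'' ∩ (Subtype.val ⁻¹' E (e k)) := ⟨hz, hwE⟩
        rw [hC''A] at this; exact this
    · obtain ⟨z, hz1, hz2⟩ := hC''B1
      exact ⟨z, ⟨z, hz1, rfl⟩, hz2⟩
    · obtain ⟨z, hz1, hz2⟩ := hC''B2
      exact ⟨z, ⟨z, hz1, rfl⟩, hz2⟩
  -- build the sequence
  choose Cn jn hsub hgood using hstep
  let seq : ∀ n : ℕ, Σ' (C : Set X) (j : Γ), Good n C j := fun n =>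
    Nat.rec ⟨univ, γ₀, hbase⟩
      (fun n p => ⟨Cn n p.1 p.2.1 p.2.2, jn n p.1 p.2.1 p.2.2, hgood n p.1 p.2.1 p.2.2⟩) n
  have hDsub : ∀ n, (seq (n + 1)).1 ⊆ (seq n).1 := fun n =>
    hsub n (seq n).1 (seq n).2.1 (seq n).2.2
  have hDne : ∀ n, ((seq n).1).Nonempty := fun n => (seq n).2.2.2.1.nonempty
  have hDcl : ∀ n, IsClosed ((seq n).1) := fun n => (seq n).2.2.1
  obtain ⟨x, hx⟩ := IsCompact.nonempty_iInter_of_sequence_nonempty_isCompact_isClosed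
    (fun n => (seq n).1) hDsub hDne ((hDcl 0).isCompact) hDcl
  obtain ⟨γ, hγ⟩ := hEcover x
  obtain ⟨k, hk⟩ := he γ
  have hxk : x ∈ (seq (k + 1)).1 := mem_iInter.mp hx (k + 1)
  have : x ∈ (seq (k + 1)).1 ∩ E (e k) := ⟨hxk, hk ▸ hγ⟩
  rw [(seq (k + 1)).2.2.2.2.1 k (Nat.lt_succ_self k)] at this
  exact this
end
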